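/- arXiv:1306.0110 — 3 statements merged into one kernel-verified Lean document; each statement's English description precedes it below -/
import Mathlib

section
/- For any monotone-increasing graph property h on a finite vertex set V₀, if h is not evasive (i.e., its decision-tree complexity is strictly less than |V₀| choose 2) and the associated abstract simplicial complex Δ_h of edge-sets of graphs not satisfying h is nonempty, then Δ_h is collapsible. -/
/-- The type of potential edges on the vertex set `V`: unordered pairs of
distinct vertices. -/
def Edge (V : Type*) := {e : Sym2 V // ¬ e.IsDiag}

instance Edge.decEq {V : Type*} [DecidableEq V] : DecidableEq (Edge V) :=
  fun a b => decidable_of_iff (a.1 = b.1) Subtype.ext_iff.symm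

instance Edge.fintype {V : Type*} [DecidableEq V] [Fintype V] : Fintype (Edge V) := by
  unfold Edge; infer_instance

/-- The action of a permutation of the vertices on edges. -/
def edgeMap {V : Type*} (σ : Equiv.Perm V) (e : Edge V) : Edge V :=
  ⟨e.1.map σ, by
    obtain ⟨⟨a, b⟩, h⟩ := e
    simpa using h⟩

/-- Binary decision trees querying values of type `E`. -/
inductive DTree (E : Type*) : Type _
  | leaf : Bool → DTree E
  | node : E → DTree E → DTree E → DTree E

/-- Evaluation of a decision tree on an input `g : E → Bool`. -/
def DTree.eval {E : Type*} : DTree E → (E → Bool) → Bool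
  | .leaf b, _ => b
  | .node e t₁ t₂, g => if g e then t₁.eval g else t₂.eval g

/-- The depth of a decision tree (worst-case number of queries). -/
def DTree.depth {E : Type*} : DTree E → ℕ
  | .leaf _ => 0
  | .node _ t₁ t₂ => max t₁.depth t₂.depth + 1

/-- The tree `t` computes `h`. -/
def Computes {E : Type*} (t : DTree E) (h : (E → Bool) → Bool) : Prop :=
  ∀ g, t.eval g = h g

/-- A graph on `V` is identified with its indicator function on edges;
`h` is a graph property if it is invariant under relabelling the vertices. -/
def IsGraphProperty {V : Type*} (h : (Edge V → Bool) → Bool) : Prop :=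
  ∀ (σ : Equiv.Perm V) (g : Edge V → Bool), h (fun e => g (edgeMap σ e)) = h g

/-- `h` is monotone increasing: adding edges preserves the value `true`. -/
def MonotoneIncreasing {V : Type*} (h : (Edge V → Bool) → Bool) : Prop :=
  ∀ g g' : Edge V → Bool, (∀ e, g e = true → g' e = true) → h g = true → h g' = true

def IsMaximalSimplex {V : Type*} [DecidableEq V] (Δ : Finset (Finset V)) (Q : Finset V) : Prop :=
  Q ∈ Δ ∧ ∀ R ∈ Δ, Q ⊆ R → R = Q

/-- A free face: a nonmaximal simplex contained in exactly one maximal simplex. -/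
def IsFreeFace {V : Type*} [DecidableEq V] (Δ : Finset (Finset V)) (β : Finset V) : Prop :=
  β ∈ Δ ∧ ¬ IsMaximalSimplex Δ β ∧ ∃! α, IsMaximalSimplex Δ α ∧ β ⊆ α

/-- An elementary collapse: delete a free face together with all simplices containing it. -/
def ElemCollapse {V : Type*} [DecidableEq V] (Δ Δ' : Finset (Finset V)) : Prop :=
  ∃ β, IsFreeFace Δ β ∧ Δ' = Δ.filter (fun Q => ¬ β ⊆ Q)

def CollapsesTo {V : Type*} [DecidableEq V] (Δ Δ' : Finset (Finset V)) : Prop :=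
  Relation.ReflTransGen ElemCollapse Δ Δ'

/-- A complex is collapsible if some sequence of elementary collapses reduces it
to a single vertex. -/
def Collapsible {V : Type*} [DecidableEq V] (Δ : Finset (Finset V)) : Prop :=
  ∃ v : V, CollapsesTo Δ {({v} : Finset V)}

/-- The simplicial complex `Δ_h` associated to a monotone increasing graph
function `h`: its simplices are the nonempty edge-sets of the graphs not
satisfying `h`. -/
def graphComplex {V : Type*} [DecidableEq V] [Fintype V]
    (h : (Edge V → Bool) → Bool) : Finset (Finset (Edge V)) :=
  Finset.univ.filter (fun Q : Finset (Edge V) => Q.Nonempty ∧ h (fun e => e ∈ Q) = false)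

section Helpers

variable {E : Type*} [DecidableEq E]

/-- indicator function of a finset -/
def ind (A : Finset E) : E → Bool := fun x => x ∈ A

lemma DTree.eval_local (t : DTree E) (g : E → Bool) :
    ∃ Q : Finset E, Q.card ≤ t.depth ∧
      ∀ g', (∀ x ∈ Q, g' x = g x) → t.eval g' = t.eval g := by
  induction t with
  | leaf b => exact ⟨∅, by simp [DTree.depth], fun g' _ => rfl⟩
  | node e t₁ t₂ ih₁ ih₂ =>
    by_cases hg : g e
    · obtain ⟨Q, hQ, hloc⟩ := ih₁
      refine ⟨insert e Q, ?_, ?_⟩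
      · have := Finset.card_insert_le e Q
        have : t₁.depth ≤ max t₁.depth t₂.depth := le_max_left _ _
        simp only [DTree.depth]; omega
      · intro g' hg'
        have he : g' e = g e := hg' e (Finset.mem_insert_self _ _)
        simp only [DTree.eval, he, hg, if_true,
          hloc g' (fun x hx => hg' x (Finset.mem_insert_of_mem hx))]
    · obtain ⟨Q, hQ, hloc⟩ := ih₂
      refine ⟨insert e Q, ?_, ?_⟩
      · have := Finset.card_insert_le e Q
        have : t₂.depth ≤ max t₁.depth t₂.depth := le_max_right _ _
        simp only [DTree.depth]; omega
      · intro g' hg'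
        have he : g' e = g e := hg' e (Finset.mem_insert_self _ _)
        simp [DTree.eval, he, hg,
          hloc g' (fun x hx => hg' x (Finset.mem_insert_of_mem hx))]

lemma collapsesTo_subset {Δ Δ' : Finset (Finset E)} (h : CollapsesTo Δ Δ') : Δ' ⊆ Δ := by
  induction h with
  | refl => exact subset_rfl
  | tail _ hstep ih =>
    obtain ⟨β, _, rfl⟩ := hstep
    exact (Finset.filter_subset _ _).trans ih

/-- the full simplex on a nonempty finite set is collapsible -/
lemma fullSimplex_collapsible : ∀ (n : ℕ) (S : Finset E), S.card = n → S.Nonempty →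
    ∃ v ∈ S, CollapsesTo (S.powerset.filter (fun Q => Q.Nonempty)) {({v} : Finset E)} := by
  intro n
  induction n using Nat.strong_induction_on with
  | _ n ih =>
  intro S hcard hne
  rcases eq_or_lt_of_le (Finset.one_le_card.mpr hne) with h1 | h2
  · obtain ⟨v, rfl⟩ := Finset.card_eq_one.mp h1.symm
    refine ⟨v, Finset.mem_singleton_self v, ?_⟩
    have : ({v} : Finset E).powerset.filter (fun Q => Q.Nonempty) = {({v} : Finset E)} := by
      ext Q
      simp only [Finset.mem_filter, Finset.mem_powerset, Finset.mem_singleton,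
        Finset.subset_singleton_iff]
      constructor
      · rintro ⟨(rfl | rfl), hne⟩
        · exact absurd hne (by simp)
        · rfl
      · rintro rfl; exact ⟨Or.inr rfl, Finset.singleton_nonempty v⟩
    rw [this]
    exact Relation.ReflTransGen.refl
  · -- card S ≥ 2 : pick u, collapse with free face {u}
    obtain ⟨u, hu⟩ := hne
    have hcard' : (S.erase u).card = n - 1 := by rw [Finset.card_erase_of_mem hu, hcard]
    have hne' : (S.erase u).Nonempty := by
      rw [← Finset.card_pos, hcard']; omega
    obtain ⟨v, hv, hcoll⟩ := ih (n-1) (by omega) (S.erase u) hcard' hne'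
    refine ⟨v, Finset.mem_of_mem_erase hv, ?_⟩
    have hstep : ElemCollapse (S.powerset.filter (fun Q => Q.Nonempty))
        ((S.erase u).powerset.filter (fun Q => Q.Nonempty)) := by
      refine ⟨{u}, ⟨?_, ?_, ?_⟩, ?_⟩
      · simp [hu]
      · rintro ⟨-, hmax⟩
        have hS : S ∈ S.powerset.filter (fun Q => Q.Nonempty) := by
          simp only [Finset.mem_filter, Finset.mem_powerset]
          exact ⟨subset_rfl, ⟨u, hu⟩⟩
        have hSu := hmax S hS (Finset.singleton_subset_iff.mpr hu)
        rw [hSu] at h2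
        simp at h2
      · refine ⟨S, ⟨⟨by simp only [Finset.mem_filter, Finset.mem_powerset]; exact ⟨subset_rfl, ⟨u, hu⟩⟩, ?_⟩,
          Finset.singleton_subset_iff.mpr hu⟩, ?_⟩
        · intro R hR hSR
          simp only [Finset.mem_filter, Finset.mem_powerset] at hR
          exact subset_antisymm hR.1 hSR
        · rintro M ⟨⟨hM, hmax⟩, -⟩
          simp only [Finset.mem_filter, Finset.mem_powerset] at hM
          exact (hmax S (by simp only [Finset.mem_filter, Finset.mem_powerset]; exact ⟨subset_rfl, ⟨u, hu⟩⟩) hM.1).symm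
      · ext Q
        simp only [Finset.mem_filter, Finset.mem_powerset, Finset.singleton_subset_iff,
          Finset.subset_erase]
        tauto
    exact Relation.ReflTransGen.head hstep hcoll

end Helpers

section Cone

variable {E : Type*} [DecidableEq E]

/-- `Δ₀ ∪ e * (cur ∪ {∅})` : the deletion together with the cone with apex `e` over `cur`. -/
def Cone (e : E) (Δ₀ cur : Finset (Finset E)) : Finset (Finset E) :=
  Δ₀ ∪ cur.image (insert e) ∪ {({e} : Finset E)}

lemma mem_cone {e : E} {Δ₀ cur : Finset (Finset E)} {Q : Finset E} :
    Q ∈ Cone e Δ₀ cur ↔ Q ∈ Δ₀ ∨ (∃ α ∈ cur, insert e α = Q) ∨ Q = {e} := by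
  simp [Cone, Finset.mem_union, Finset.mem_image]
  exact or_comm.trans or_assoc

lemma lift_elem (e : E) (Δ₀ cur cur' : Finset (Finset E))
    (h₀ : ∀ σ ∈ Δ₀, e ∉ σ) (h₁ : ∀ σ ∈ cur, e ∉ σ) (h₁' : ∀ σ ∈ cur, σ.Nonempty)
    (hc : ElemCollapse cur cur') :
    ElemCollapse (Cone e Δ₀ cur) (Cone e Δ₀ cur') := by
  obtain ⟨β, ⟨hβmem, hβnotmax, hex⟩, hfil⟩ := hc
  obtain ⟨α, ⟨⟨hαmem, hαmax⟩, hβα⟩, huniq⟩ := hex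
  have heβ : e ∉ β := h₁ β hβmem
  have heα : e ∉ α := h₁ α hαmem
  have hβne : β.Nonempty := h₁' β hβmem
  have hαne : α.Nonempty := h₁' α hαmem
  -- key: insert e is "injective" on e-free sets
  have inj : ∀ a b : Finset E, e ∉ a → e ∉ b → insert e a = insert e b → a = b := by
    intro a b ha hb hab
    have := congrArg (Finset.erase · e) hab
    simpa [Finset.erase_insert_of_ne, Finset.erase_insert, ha, hb,
      Finset.erase_eq_of_notMem] using this
  -- β not ⊆ {e}
  have hβnotsub : ¬ β ⊆ ({e} : Finset E) := by
    intro hsub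
    obtain ⟨x, hx⟩ := hβne
    have := hsub hx
    simp only [Finset.mem_singleton] at this
    exact heβ (this ▸ hx)
  -- maximality of insert e α in the cone
  have hAmax : IsMaximalSimplex (Cone e Δ₀ cur) (insert e α) := by
    constructor
    · exact mem_cone.mpr (Or.inr (Or.inl ⟨α, hαmem, rfl⟩))
    · intro R hR hsub
      rcases mem_cone.mp hR with hR0 | ⟨α', hα', rfl⟩ | rfl
      · exact absurd (hsub (Finset.mem_insert_self e α)) (h₀ R hR0)
      · have hαα' : α ⊆ α' := by
          intro x hx
          rcases Finset.mem_insert.mp (hsub (Finset.mem_insert_of_mem hx)) with h | h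
          · exact absurd (h ▸ hx) heα
          · exact h
        rw [hαmax α' hα' hαα']
      · obtain ⟨x, hx⟩ := hαne
        have := hsub (Finset.mem_insert_of_mem hx)
        simp only [Finset.mem_singleton] at this
        exact absurd (this ▸ hx) heα
  refine ⟨insert e β, ⟨?_, ?_, ?_⟩, ?_⟩
  · exact mem_cone.mpr (Or.inr (Or.inl ⟨β, hβmem, rfl⟩))
  · -- insert e β is non-maximal
    rintro ⟨-, hmax⟩
    -- β non-maximal in cur: ∃ R ∈ cur, β ⊆ R, R ≠ β
    have : ∃ R ∈ cur, β ⊆ R ∧ R ≠ β := by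
      by_contra hcon
      push_neg at hcon
      exact hβnotmax ⟨hβmem, fun R hR hsub => by
        by_contra hne; exact hne (by_contra fun hne2 => hne2 ((hcon R hR hsub)))⟩
    obtain ⟨R, hR, hβR, hRβ⟩ := this
    have := hmax (insert e R) (mem_cone.mpr (Or.inr (Or.inl ⟨R, hR, rfl⟩)))
      (Finset.insert_subset_insert e hβR)
    exact hRβ (inj R β (h₁ R hR) heβ this)
  · -- unique maximal containing insert e β
    refine ⟨insert e α, ⟨hAmax, Finset.insert_subset_insert e hβα⟩, ?_⟩
    rintro M ⟨⟨hMmem, hMmax⟩, hβM⟩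
    rcases mem_cone.mp hMmem with hM0 | ⟨α', hα', rfl⟩ | rfl
    · exact absurd (hβM (Finset.mem_insert_self e β)) (h₀ M hM0)
    · have hβα' : β ⊆ α' := by
        intro x hx
        rcases Finset.mem_insert.mp (hβM (Finset.mem_insert_of_mem hx)) with h | h
        · exact absurd (h ▸ hx) heβ
        · exact h
      have hα'max : ∀ R ∈ cur, α' ⊆ R → R = α' := by
        intro R hR hsub
        have := hMmax (insert e R) (mem_cone.mpr (Or.inr (Or.inl ⟨R, hR, rfl⟩)))
          (Finset.insert_subset_insert e hsub)
        exact inj R α' (h₁ R hR) (h₁ α' hα') this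
      rw [huniq α' ⟨⟨hα', hα'max⟩, hβα'⟩]
    · exact absurd hβM (by
        intro hsub
        exact hβnotsub (fun x hx => hsub (Finset.mem_insert_of_mem hx)))
  · -- the filter equation
    rw [hfil]
    ext Q
    simp only [Finset.mem_filter, mem_cone, Finset.mem_filter]
    constructor
    · rintro (hQ | ⟨α', ⟨hα', hns⟩, rfl⟩ | rfl)
      · refine ⟨Or.inl hQ, ?_⟩
        intro hsub
        exact h₀ Q hQ (hsub (Finset.mem_insert_self e β))
      · refine ⟨Or.inr (Or.inl ⟨α', hα', rfl⟩), ?_⟩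
        intro hsub
        refine hns ?_
        intro x hx
        rcases Finset.mem_insert.mp (hsub (Finset.mem_insert_of_mem hx)) with h | h
        · exact absurd (h ▸ hx) heβ
        · exact h
      · refine ⟨Or.inr (Or.inr rfl), ?_⟩
        intro hsub
        exact hβnotsub (fun x hx => hsub (Finset.mem_insert_of_mem hx))
    · rintro ⟨hQ | ⟨α', hα', rfl⟩ | rfl, hnsub⟩
      · exact Or.inl hQ
      · refine Or.inr (Or.inl ⟨α', ⟨hα', ?_⟩, rfl⟩)
        intro hβα'
        exact hnsub (Finset.insert_subset_insert e hβα')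
      · exact Or.inr (Or.inr rfl)

lemma lift_chain (e : E) (Δ₀ : Finset (Finset E)) (h₀ : ∀ σ ∈ Δ₀, e ∉ σ) :
    ∀ cur Λ : Finset (Finset E), CollapsesTo cur Λ →
    (∀ σ ∈ cur, e ∉ σ) → (∀ σ ∈ cur, σ.Nonempty) →
    CollapsesTo (Cone e Δ₀ cur) (Cone e Δ₀ Λ) := by
  intro cur Λ hc
  induction hc using Relation.ReflTransGen.head_induction_on with
  | refl => intro _ _; exact Relation.ReflTransGen.refl
  | head hstep _ ih =>
    rename_i a b _
    intro h₁ h₁'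
    have hba : b ⊆ a := by
      obtain ⟨β, _, rfl⟩ := hstep
      exact Finset.filter_subset _ _
    exact Relation.ReflTransGen.head (lift_elem e Δ₀ a b h₀ h₁ h₁' hstep)
      (ih (fun σ hσ => h₁ σ (hba hσ)) (fun σ hσ => h₁' σ (hba hσ)))

lemma last_step (e v : E) (Δ₀ : Finset (Finset E)) (h₀ : ∀ σ ∈ Δ₀, e ∉ σ) (hv : v ≠ e) :
    ElemCollapse (Cone e Δ₀ {({v} : Finset E)}) Δ₀ := by
  have hA : insert e ({v} : Finset E) ≠ {e} := by
    intro hx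
    have : v ∈ ({e} : Finset E) := hx ▸ Finset.mem_insert_of_mem (Finset.mem_singleton_self v)
    exact hv (Finset.mem_singleton.mp this)
  have hmemchar : ∀ Q, Q ∈ Cone e Δ₀ {({v} : Finset E)} ↔
      Q ∈ Δ₀ ∨ Q = insert e {v} ∨ Q = {e} := by
    intro Q
    rw [mem_cone]
    simp only [Finset.mem_singleton]
    constructor
    · rintro (h | ⟨α, rfl, rfl⟩ | h) <;> tauto
    · rintro (h | rfl | h)
      · tauto
      · exact Or.inr (Or.inl ⟨{v}, rfl, rfl⟩)
      · tauto
  have hAmax : IsMaximalSimplex (Cone e Δ₀ {({v} : Finset E)}) (insert e {v}) := by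
    constructor
    · exact (hmemchar _).mpr (Or.inr (Or.inl rfl))
    · intro R hR hsub
      rcases (hmemchar R).mp hR with h | rfl | rfl
      · exact absurd (hsub (Finset.mem_insert_self e {v})) (h₀ R h)
      · rfl
      · have : v ∈ ({e} : Finset E) := hsub (Finset.mem_insert_of_mem (Finset.mem_singleton_self v))
        exact absurd (Finset.mem_singleton.mp this) hv
  refine ⟨{e}, ⟨?_, ?_, ?_⟩, ?_⟩
  · exact (hmemchar _).mpr (Or.inr (Or.inr rfl))
  · rintro ⟨-, hmax⟩
    have := hmax (insert e {v}) ((hmemchar _).mpr (Or.inr (Or.inl rfl)))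
      (Finset.singleton_subset_iff.mpr (Finset.mem_insert_self e {v}))
    exact hA this
  · refine ⟨insert e {v}, ⟨hAmax, Finset.singleton_subset_iff.mpr (Finset.mem_insert_self e {v})⟩, ?_⟩
    rintro M ⟨⟨hMmem, hMmax⟩, heM⟩
    rcases (hmemchar M).mp hMmem with h | rfl | rfl
    · exact absurd (heM (Finset.mem_singleton_self e)) (h₀ M h)
    · rfl
    · exact (hMmax (insert e {v}) ((hmemchar _).mpr (Or.inr (Or.inl rfl)))
        (Finset.singleton_subset_iff.mpr (Finset.mem_insert_self e {v}))).symm ▸ rfl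
  · ext Q
    simp only [Finset.mem_filter, Finset.singleton_subset_iff]
    rw [hmemchar Q]
    constructor
    · intro h
      exact ⟨Or.inl h, h₀ Q h⟩
    · rintro ⟨h | rfl | rfl, hne⟩
      · exact h
      · exact absurd (Finset.mem_insert_self e {v}) hne
      · exact absurd (Finset.mem_singleton_self e) hne

end Cone

section Main

variable {E : Type*} [DecidableEq E]

/-- the complex of nonempty `Q ⊆ S` with `h (Q ∪ T) = false` -/
def simComplex (h : (E → Bool) → Bool) (S T : Finset E) : Finset (Finset E) :=
  S.powerset.filter (fun Q => Q.Nonempty ∧ h (ind (Q ∪ T)) = false)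

lemma mem_simComplex {h : (E → Bool) → Bool} {S T Q : Finset E} :
    Q ∈ simComplex h S T ↔ Q ⊆ S ∧ Q.Nonempty ∧ h (ind (Q ∪ T)) = false := by
  simp [simComplex, Finset.mem_filter, Finset.mem_powerset, and_assoc]

lemma mono_set {h : (E → Bool) → Bool}
    (hmono : ∀ g g' : E → Bool, (∀ e, g e = true → g' e = true) → h g = true → h g' = true)
    {A B : Finset E} (hAB : A ⊆ B) (hB : h (ind B) = false) : h (ind A) = false := by
  by_contra hA
  rw [Bool.not_eq_false] at hA
  have := hmono (ind A) (ind B) (fun e he => by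
    simp only [ind, decide_eq_true_eq] at he ⊢
    exact hAB he) hA
  rw [this] at hB
  simp at hB

/-- If `h` is computed on the cube by a shallow tree and `h T = false`, then some
singleton extension within `S` also gives `false`. -/
lemma exists_false_singleton (h : (E → Bool) → Bool) (t : DTree E) (S T : Finset E)
    (hcomp : ∀ g : E → Bool, (∀ x ∉ S, g x = (x ∈ T : Bool)) → t.eval g = h g)
    (hd : t.depth < S.card) (hT : h (ind T) = false) :
    ∃ e ∈ S, h (ind (insert e T)) = false := by
  obtain ⟨Q, hQcard, hloc⟩ := t.eval_local (ind T)
  have hnsub : ¬ S ⊆ Q := fun hsub => by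
    have := Finset.card_le_card hsub
    omega
  obtain ⟨e, heS, heQ⟩ := Finset.not_subset.mp hnsub
  refine ⟨e, heS, ?_⟩
  have h1 : t.eval (ind (insert e T)) = t.eval (ind T) := by
    refine hloc _ (fun x hx => ?_)
    have hxe : x ≠ e := fun hh => heQ (hh ▸ hx)
    simp [ind, Finset.mem_insert, hxe]
  have h2 : t.eval (ind T) = h (ind T) := hcomp _ (fun x _ => rfl)
  have h3 : t.eval (ind (insert e T)) = h (ind (insert e T)) := by
    refine hcomp _ (fun x hx => ?_)
    have hxe : x ≠ e := fun hh => hx (hh ▸ heS)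
    simp [ind, Finset.mem_insert, hxe]
  rw [← h3, h1, h2, hT]

lemma ind_cube {S T : Finset E} (hdisj : Disjoint S T) (σ : Finset E) (hσ : σ ⊆ S) :
    ∀ x ∉ S, ind (σ ∪ T) x = (x ∈ T : Bool) := by
  intro x hx
  have hxσ : x ∉ σ := fun hh => hx (hσ hh)
  simp [ind, Finset.mem_union, hxσ]

lemma aux_main (h : (E → Bool) → Bool)
    (hmono : ∀ g g' : E → Bool, (∀ e, g e = true → g' e = true) → h g = true → h g' = true) :
    ∀ (t : DTree E) (S T : Finset E), Disjoint S T →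
    (∀ g : E → Bool, (∀ x ∉ S, g x = (x ∈ T : Bool)) → t.eval g = h g) →
    t.depth < S.card → (simComplex h S T).Nonempty → Collapsible (simComplex h S T) := by
  intro t
  induction t with
  | leaf b =>
    intro S T hdisj hcomp hd hne
    obtain ⟨σ₀, hσ₀⟩ := hne
    rw [mem_simComplex] at hσ₀
    have hb : b = false := by
      have := hcomp (ind (σ₀ ∪ T)) (ind_cube hdisj σ₀ hσ₀.1)
      rw [show DTree.eval (DTree.leaf b) (ind (σ₀ ∪ T)) = b from rfl] at this
      rw [this, hσ₀.2.2]
    have hfull : simComplex h S T = S.powerset.filter (fun Q => Q.Nonempty) := by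
      ext Q
      rw [mem_simComplex]
      simp only [Finset.mem_filter, Finset.mem_powerset]
      refine ⟨fun ⟨h1, h2, _⟩ => ⟨h1, h2⟩, fun ⟨h1, h2⟩ => ⟨h1, h2, ?_⟩⟩
      have := hcomp (ind (Q ∪ T)) (ind_cube hdisj Q h1)
      rw [show DTree.eval (DTree.leaf b) (ind (Q ∪ T)) = b from rfl] at this
      rw [← this, hb]
    have hSne : S.Nonempty := by
      rw [← Finset.card_pos]
      have : (DTree.leaf b : DTree E).depth = 0 := rfl
      omega
    obtain ⟨v, _, hcoll⟩ := fullSimplex_collapsible S.card S rfl hSne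
    rw [hfull]
    exact ⟨v, hcoll⟩
  | node e t₁ t₂ ih₁ ih₂ =>
    intro S T hdisj hcomp hd hne
    have hd₁ : t₁.depth + 1 ≤ (DTree.node e t₁ t₂).depth :=
      Nat.succ_le_succ (le_max_left _ _)
    have hd₂ : t₂.depth + 1 ≤ (DTree.node e t₁ t₂).depth :=
      Nat.succ_le_succ (le_max_right _ _)
    by_cases heS : e ∈ S
    · -- the interesting case
      set S' := S.erase e with hS'
      have hcardS' : S'.card = S.card - 1 := Finset.card_erase_of_mem heS
      have heT : e ∉ T := fun hh => (Finset.disjoint_left.mp hdisj heS) hh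
      have heS' : e ∉ S' := Finset.notMem_erase e S
      have hdisj₂ : Disjoint S' T := Finset.disjoint_of_subset_left (Finset.erase_subset e S) hdisj
      have hdisj₁ : Disjoint S' (insert e T) := by
        rw [Finset.disjoint_insert_right]
        exact ⟨heS', hdisj₂⟩
      -- t₂ computes h on the cube (S', T)
      have hcomp₂ : ∀ g : E → Bool, (∀ x ∉ S', g x = (x ∈ T : Bool)) →
          t₂.eval g = h g := by
        intro g hg
        have hge : g e = false := by
          have := hg e heS'
          simp [heT] at this
          exact this
        have := hcomp g (fun x hx => hg x (fun hh => hx (Finset.mem_of_mem_erase hh)))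
        rwa [show DTree.eval (DTree.node e t₁ t₂) g = if g e then t₁.eval g else t₂.eval g
          from rfl, hge, if_neg (by simp)] at this
      -- t₁ computes h on the cube (S', insert e T)
      have hcomp₁ : ∀ g : E → Bool, (∀ x ∉ S', g x = (x ∈ insert e T : Bool)) →
          t₁.eval g = h g := by
        intro g hg
        have hge : g e = true := by
          have := hg e heS'
          simpa using this
        have := hcomp g (fun x hx => by
          have hxe : x ≠ e := fun hh => hx (hh ▸ heS)
          have := hg x (fun hh => hx (Finset.mem_of_mem_erase hh))
          rwa [show ((x ∈ insert e T : Bool)) = (x ∈ T : Bool) by simp [Finset.mem_insert, hxe]]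
            at this)
        rwa [show DTree.eval (DTree.node e t₁ t₂) g = if g e then t₁.eval g else t₂.eval g
          from rfl, hge, if_pos rfl] at this
      have hdlt₁ : t₁.depth < S'.card := by omega
      have hdlt₂ : t₂.depth < S'.card := by omega
      set Δ₀ := simComplex h S' T with hΔ₀
      set Δ₁ := simComplex h S' (insert e T) with hΔ₁
      -- monotonicity: Δ₁ ⊆ Δ₀ and Δ₀ ⊆ Δ
      have hΔ₁₀ : Δ₁ ⊆ Δ₀ := by
        intro σ hσ
        rw [mem_simComplex] at hσ ⊢
        refine ⟨hσ.1, hσ.2.1, mono_set hmono ?_ hσ.2.2⟩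
        exact Finset.union_subset_union_right (Finset.subset_insert e T)
      have he_not_mem : ∀ σ ∈ Δ₀, e ∉ σ := fun σ hσ hh =>
        heS' ((mem_simComplex.mp hσ).1 hh)
      have he_not_mem₁ : ∀ σ ∈ Δ₁, e ∉ σ := fun σ hσ => he_not_mem σ (hΔ₁₀ hσ)
      have hnonempty₁ : ∀ σ ∈ Δ₁, σ.Nonempty := fun σ hσ => (mem_simComplex.mp hσ).2.1
      by_cases hΔ₁ne : Δ₁.Nonempty
      · -- Δ₁ nonempty: collapse the cone part, then Δ₀
        -- h (insert e T) = false, so {e} is a simplex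
        have heF : h (ind (insert e T)) = false := by
          obtain ⟨σ, hσ⟩ := hΔ₁ne
          rw [mem_simComplex] at hσ
          exact mono_set hmono Finset.subset_union_right hσ.2.2
        -- decomposition
        have hdecomp : simComplex h S T = Cone e Δ₀ Δ₁ := by
          ext Q
          rw [mem_simComplex, mem_cone]
          constructor
          · rintro ⟨hQS, hQne, hQf⟩
            by_cases heQ : e ∈ Q
            · by_cases hQe : Q = {e}
              · exact Or.inr (Or.inr hQe)
              · refine Or.inr (Or.inl ⟨Q.erase e, ?_, Finset.insert_erase heQ⟩)
                rw [mem_simComplex]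
                refine ⟨fun x hx => Finset.mem_erase.mpr
                  ⟨(Finset.mem_erase.mp hx).1, hQS (Finset.mem_of_mem_erase hx)⟩, ?_, ?_⟩
                · rw [Finset.nonempty_iff_ne_empty]
                  intro hcon
                  exact hQe (by
                    have := Finset.insert_erase heQ
                    rw [hcon] at this
                    simp at this
                    exact this.symm)
                · have hun : Q.erase e ∪ insert e T = Q ∪ T := by
                    ext x
                    simp only [Finset.mem_union, Finset.mem_erase, Finset.mem_insert]
                    constructor
                    · rintro (⟨-, hx⟩ | (rfl | hx))
                      · exact Or.inl hx
                      · exact Or.inl heQ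
                      · exact Or.inr hx
                    · rintro (hx | hx)
                      · by_cases hxe : x = e
                        · exact Or.inr (Or.inl hxe)
                        · exact Or.inl ⟨hxe, hx⟩
                      · exact Or.inr (Or.inr hx)
                  rw [show ind (Q.erase e ∪ insert e T) = ind (Q ∪ T) from by rw [hun]]
                  exact hQf
            · exact Or.inl (mem_simComplex.mpr
                ⟨fun x hx => Finset.mem_erase.mpr ⟨fun hh => heQ (hh ▸ hx), hQS hx⟩, hQne, hQf⟩)
          · rintro (hQ | ⟨α, hα, rfl⟩ | rfl)
            · rw [mem_simComplex] at hQ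
              exact ⟨hQ.1.trans (Finset.erase_subset e S), hQ.2.1, hQ.2.2⟩
            · rw [mem_simComplex] at hα
              refine ⟨Finset.insert_subset heS (hα.1.trans (Finset.erase_subset e S)),
                Finset.insert_nonempty e α, ?_⟩
              have hun : insert e α ∪ T = α ∪ insert e T := by
                ext x
                simp only [Finset.mem_union, Finset.mem_insert]
                tauto
              rw [show ind (insert e α ∪ T) = ind (α ∪ insert e T) from by rw [hun]]
              exact hα.2.2
            · refine ⟨Finset.singleton_subset_iff.mpr heS, Finset.singleton_nonempty e, ?_⟩
              rw [← Finset.insert_eq]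
              exact heF
        -- collapse Δ₁ to a point
        obtain ⟨v, hv⟩ := ih₁ S' (insert e T) hdisj₁ hcomp₁ hdlt₁ hΔ₁ne
        have hvΔ₁ : ({v} : Finset E) ∈ Δ₁ := collapsesTo_subset hv (Finset.mem_singleton_self _)
        have hve : v ≠ e := by
          intro hh
          exact he_not_mem₁ {v} hvΔ₁ (hh ▸ Finset.mem_singleton_self v)
        -- lift to the cone
        have hchain : CollapsesTo (Cone e Δ₀ Δ₁) (Cone e Δ₀ {({v} : Finset E)}) :=
          lift_chain e Δ₀ he_not_mem Δ₁ {({v} : Finset E)} hv he_not_mem₁ hnonempty₁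
        have hlast : ElemCollapse (Cone e Δ₀ {({v} : Finset E)}) Δ₀ :=
          last_step e v Δ₀ he_not_mem hve
        have hΔ₀ne : Δ₀.Nonempty := hΔ₁ne.mono hΔ₁₀
        obtain ⟨w, hw⟩ := ih₂ S' T hdisj₂ hcomp₂ hdlt₂ hΔ₀ne
        refine ⟨w, ?_⟩
        rw [hdecomp]
        exact (hchain.trans (Relation.ReflTransGen.single hlast)).trans hw
      · -- Δ₁ empty: nothing contains e, so the complex is Δ₀
        have heT' : h (ind (insert e T)) = true := by
          by_contra hcon
          rw [Bool.not_eq_true] at hcon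
          obtain ⟨f, hf, hff⟩ := exists_false_singleton h t₁ S' (insert e T) hcomp₁ hdlt₁ hcon
          refine hΔ₁ne ⟨{f}, mem_simComplex.mpr ⟨Finset.singleton_subset_iff.mpr hf,
            Finset.singleton_nonempty f, ?_⟩⟩
          rw [← Finset.insert_eq]
          exact hff
        have heq : simComplex h S T = Δ₀ := by
          ext Q
          rw [mem_simComplex, hΔ₀, mem_simComplex]
          constructor
          · rintro ⟨hQS, hQne, hQf⟩
            refine ⟨?_, hQne, hQf⟩
            intro x hx
            refine Finset.mem_erase.mpr ⟨?_, hQS hx⟩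
            rintro rfl
            have : h (ind (insert x T)) = false := by
              refine mono_set hmono ?_ hQf
              intro y hy
              rcases Finset.mem_insert.mp hy with rfl | hy
              · exact Finset.mem_union_left T hx
              · exact Finset.mem_union_right Q hy
            rw [heT'] at this
            simp at this
          · rintro ⟨hQS, hQne, hQf⟩
            exact ⟨hQS.trans (Finset.erase_subset e S), hQne, hQf⟩
        rw [heq]
        exact ih₂ S' T hdisj₂ hcomp₂ hdlt₂ (by rw [show simComplex h S' T = Δ₀ from rfl, ← heq]; exact hne)
    · -- e ∉ S : the query is determined, use the relevant subtree
      by_cases heT : e ∈ T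
      · refine ih₁ S T hdisj (fun g hg => ?_) (by omega) hne
        have hge : g e = true := by
          have := hg e heS
          simp [heT] at this
          exact this
        have := hcomp g hg
        rwa [show DTree.eval (DTree.node e t₁ t₂) g = if g e then t₁.eval g else t₂.eval g
          from rfl, hge, if_pos rfl] at this
      · refine ih₂ S T hdisj (fun g hg => ?_) (by omega) hne
        have hge : g e = false := by
          have := hg e heS
          simp [heT] at this
          exact this
        have := hcomp g hg
        rwa [show DTree.eval (DTree.node e t₁ t₂) g = if g e then t₁.eval g else t₂.eval g
          from rfl, hge, if_neg (by simp)] at this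

end Main

lemma card_edge {V : Type*} [DecidableEq V] [Fintype V] :
    Fintype.card (Edge V) = (Fintype.card V).choose 2 := by
  rw [← Sym2.card_subtype_not_diag]
  exact Fintype.card_congr (Equiv.refl (Edge V))

/-- If a monotone-increasing graph property `h` on a finite vertex set is not
evasive (some decision tree of depth `< C(|V|,2)` computes it) and `Δ_h` is
nonempty, then `Δ_h` is collapsible. -/
theorem graphComplex_collapsible_of_not_evasive
    {V : Type*} [DecidableEq V] [Fintype V]
    (h : (Edge V → Bool) → Bool)
    (hprop : IsGraphProperty h) (hmono : MonotoneIncreasing h)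
    (hne : ∃ t : DTree (Edge V), Computes t h ∧ t.depth < (Fintype.card V).choose 2)
    (hnonempty : (graphComplex h).Nonempty) :
    Collapsible (graphComplex h) := by
  obtain ⟨t, hcomp, hd⟩ := hne
  have hgc : graphComplex h = simComplex h Finset.univ ∅ := by
    ext Q
    rw [mem_simComplex]
    simp only [graphComplex, Finset.mem_filter, Finset.mem_univ, true_and,
      Finset.subset_univ, Finset.union_empty]
    unfold ind
    rfl
  rw [hgc]
  refine aux_main h hmono t Finset.univ ∅ (Finset.disjoint_empty_right _)
    (fun g _ => hcomp g) ?_ (hgc ▸ hnonempty)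
  rw [Finset.card_univ, card_edge]
  exact hd
end

section
/- If a finite abstract simplicial complex Δ (with totally ordered vertices) is collapsible, then Δ is 𝔽_p-acyclic for every prime p, i.e., all reduced homology groups H̃_n(Δ, 𝔽_p) vanish. -/
def IsComplex {V : Type*} [DecidableEq V] (Δ : Finset (Finset V)) : Prop :=
  ∀ Q ∈ Δ, Q.Nonempty ∧ ∀ Q' ⊆ Q, Q'.Nonempty → Q' ∈ Δ

def IsChainOn {V : Type*} {p : ℕ} (Δ : Finset (Finset V)) (n : ℕ)
    (c : Finset V → ZMod p) : Prop :=
  ∀ Q, c Q ≠ 0 → Q ∈ Δ ∧ Q.card = n + 1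

/-- The simplicial boundary operator over `𝔽_p`. -/
def bd {V : Type*} (p : ℕ) [DecidableEq V] [Fintype V] [LinearOrder V]
    (c : Finset V → ZMod p) : Finset V → ZMod p :=
  fun R => ∑ v ∈ Finset.univ.filter (fun v => v ∉ R),
    ((-1 : ZMod p) ^ (R.filter (fun u => u < v)).card) * c (insert v R)

/-- The augmentation map `s : K₀(Δ,𝔽_p) → 𝔽_p`, summing the coefficients. -/
def aug {V : Type*} {p : ℕ} [Fintype V] [DecidableEq V]
    (c : Finset V → ZMod p) : ZMod p :=
  ∑ v : V, c {v}

/-- `Δ` is `𝔽_p`-acyclic: the augmented chain complex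
`... → K₁(Δ,𝔽_p) → K₀(Δ,𝔽_p) → 𝔽_p → 0` is exact, i.e. all reduced homology
groups `H̃_n(Δ,𝔽_p)` vanish. -/
def FpAcyclic {V : Type*} [Fintype V] [LinearOrder V]
    (Δ : Finset (Finset V)) (p : ℕ) : Prop :=
  (∃ c : Finset V → ZMod p, IsChainOn Δ 0 c ∧ aug c = 1) ∧
  (∀ c : Finset V → ZMod p, IsChainOn Δ 0 c → aug c = 0 →
    ∃ c', IsChainOn Δ 1 c' ∧ bd p c' = c) ∧
  (∀ n, 1 ≤ n → ∀ c : Finset V → ZMod p, IsChainOn Δ n c → bd p c = 0 →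
    ∃ c', IsChainOn Δ (n + 1) c' ∧ bd p c' = c)

set_option linter.unusedSectionVars false
set_option linter.unusedVariables false

namespace Collapse

variable {V : Type*} [Fintype V] [LinearOrder V] {p : ℕ}

/-- The sign `(-1)^{#{u ∈ R : u < v}}`. -/
def eps (p : ℕ) {V : Type*} [LinearOrder V] (R : Finset V) (v : V) : ZMod p :=
  (-1 : ZMod p) ^ (R.filter (fun u => u < v)).card

lemma bd_apply (c : Finset V → ZMod p) (R : Finset V) :
    bd p c R = ∑ w ∈ Finset.univ.filter (fun w => w ∉ R), eps p R w * c (insert w R) := rfl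
set_option linter.unusedSectionVars false

lemma eps_mul_self (R : Finset V) (v : V) : eps p R v * eps p R v = 1 := by
  rw [eps, ← pow_add]
  exact Even.neg_one_pow ⟨_, rfl⟩

lemma eps_insert {w : V} (x : V) {R : Finset V} (hw : w ∉ R) :
    eps p (insert w R) x = (if w < x then -1 else 1) * eps p R x := by
  unfold eps
  rw [Finset.filter_insert]
  split
  · rw [Finset.card_insert_of_notMem (fun h => hw (Finset.mem_filter.1 h).1), pow_succ]
    ring
  · rw [one_mul]

lemma eps_swap {v w : V} {T : Finset V} (hvw : v ≠ w) (hv : v ∉ T) (hw : w ∉ T) :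
    eps p (insert v T) w * eps p (insert w T) v = -(eps p T v * eps p T w) := by
  rw [eps_insert w hv, eps_insert v hw]
  rcases hvw.lt_or_gt with h | h
  · rw [if_pos h, if_neg (asymm h)]; ring
  · rw [if_neg (asymm h), if_pos h]; ring

lemma eps_pair {v w : V} {T : Finset V} (hvw : v ≠ w) (hv : v ∉ T) (hw : w ∉ T) :
    eps p T v * eps p (insert v T) w + eps p T w * eps p (insert w T) v = 0 := by
  rw [eps_insert w hv, eps_insert v hw]
  rcases hvw.lt_or_gt with h | h
  · rw [if_pos h, if_neg (asymm h)]; ring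
  · rw [if_neg (asymm h), if_pos h]; ring

lemma bd_sub (c d : Finset V → ZMod p) (R : Finset V) :
    bd p (fun Q => c Q - d Q) R = bd p c R - bd p d R := by
  simp [bd, mul_sub, Finset.sum_sub_distrib]

lemma bd_add (c d : Finset V → ZMod p) (R : Finset V) :
    bd p (fun Q => c Q + d Q) R = bd p c R + bd p d R := by
  simp [bd, mul_add, Finset.sum_add_distrib]

lemma bd_bd (c : Finset V → ZMod p) (R : Finset V) : bd p (bd p c) R = 0 := by
  rw [bd_apply]
  set s := Finset.univ.filter (fun w => w ∉ R) with hs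
  have h1 : ∀ w ∈ s, eps p R w * bd p c (insert w R)
      = ∑ x ∈ s, (if x ≠ w then
          eps p R w * (eps p (insert w R) x * c (insert x (insert w R))) else 0) := by
    intro w hw
    rw [bd_apply, Finset.mul_sum]
    have hst : Finset.univ.filter (fun x => x ∉ insert w R) = s.filter (fun x => x ≠ w) := by
      ext x
      simp [hs, Finset.mem_insert, not_or, and_comm]
    rw [hst, Finset.sum_filter]
  rw [Finset.sum_congr rfl h1, ← Finset.sum_product']
  refine Finset.sum_involution (fun q _ => q.swap) (fun q hq => ?_) (fun q hq hne h => ?_)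
    (fun q hq => by rw [Finset.mem_product] at hq ⊢; exact ⟨hq.2, hq.1⟩)
    (fun q hq => Prod.swap_swap q)
  · beta_reduce
    rw [Prod.fst_swap, Prod.snd_swap]
    rcases eq_or_ne q.2 q.1 with h | h
    · simp [h]
    · rw [if_pos h, if_pos h.symm]
      have hq1 : q.1 ∉ R := (Finset.mem_filter.1 (Finset.mem_product.1 hq).1).2
      have hq2 : q.2 ∉ R := (Finset.mem_filter.1 (Finset.mem_product.1 hq).2).2
      have hcomm : insert q.2 (insert q.1 R) = insert q.1 (insert q.2 R) :=
        Finset.insert_comm _ _ _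
      rw [hcomm]
      have hp := eps_pair (p := p) (Ne.symm h) hq1 hq2
      linear_combination c (insert q.1 (insert q.2 R)) * hp
  · apply hne
    have h2 : q.2 = q.1 := congrArg Prod.fst h
    rw [if_neg (by simp [h2])]

lemma aug_sub (c d : Finset V → ZMod p) :
    aug (fun Q => c Q - d Q) = aug c - aug d := by
  simp [aug, Finset.sum_sub_distrib]

lemma eps_singleton (a b : V) : eps p {a} b = if a < b then -1 else 1 := by
  unfold eps
  rw [Finset.filter_singleton]
  split <;> simp

lemma aug_bd (c : Finset V → ZMod p) : aug (bd p c) = 0 := by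
  unfold aug
  have h1 : ∀ v : V, bd p c {v}
      = ∑ w : V, (if w ≠ v then eps p {v} w * c (insert w {v}) else 0) := by
    intro v
    rw [bd_apply]
    have hst : Finset.univ.filter (fun w => w ∉ ({v} : Finset V))
        = Finset.univ.filter (fun w => w ≠ v) := by simp
    rw [hst, Finset.sum_filter]
  rw [Finset.sum_congr rfl (fun v _ => h1 v), ← Finset.sum_product']
  refine Finset.sum_involution (fun q _ => q.swap) (fun q hq => ?_) (fun q hq hne h => ?_)
    (fun q hq => Finset.mem_univ _) (fun q hq => Prod.swap_swap q)
  · beta_reduce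
    rw [Prod.fst_swap, Prod.snd_swap]
    rcases eq_or_ne q.2 q.1 with h | h
    · simp [h]
    · rw [if_pos h, if_pos h.symm]
      have hpair : insert q.2 {q.1} = insert q.1 {q.2} := Finset.pair_comm q.2 q.1
      rw [hpair, eps_singleton, eps_singleton]
      rcases h.lt_or_gt with h' | h'
      · rw [if_pos h', if_neg (asymm h')]; ring
      · rw [if_neg (asymm h'), if_pos h']; ring
  · apply hne
    have h2 : q.2 = q.1 := congrArg Prod.fst h
    rw [if_neg (by simp [h2])]

/-- The cone/homotopy operator pairing the faces of the interval `[β, α]`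
with the distinguished vertex `v`. -/
def DD (p : ℕ) {V : Type*} [Fintype V] [LinearOrder V] (β α : Finset V) (v : V)
    (c : Finset V → ZMod p) : Finset V → ZMod p :=
  fun T => if v ∈ T ∧ β ⊆ T ∧ T ⊆ α then eps p (T.erase v) v * c (T.erase v) else 0

/-- The key chain-homotopy identity on the interval `[β, α]`. -/
lemma key {Δ : Finset (Finset V)} {β α : Finset V} {v : V}
    (huniq : ∀ Q ∈ Δ, β ⊆ Q → Q ⊆ α)
    (hvα : v ∈ α) (hvβ : v ∉ β) {n : ℕ} {c : Finset V → ZMod p}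
    (hc : IsChainOn Δ n c)
    {S : Finset V} (hβS : β ⊆ S) (hSα : S ⊆ α) :
    bd p (DD p β α v c) S + DD p β α v (bd p c) S = c S := by
  by_cases hvS : v ∈ S
  · set T := S.erase v with hT
    have hvT : v ∉ T := Finset.notMem_erase v S
    have hins : insert v T = S := Finset.insert_erase hvS
    have hβT : β ⊆ T := fun x hx => Finset.mem_erase.2 ⟨fun h => hvβ (h ▸ hx), hβS hx⟩
    have hTα : T ⊆ α := (Finset.erase_subset v S).trans hSα
    have h1 : bd p (DD p β α v c) S
        = ∑ w ∈ Finset.univ.filter (fun w => w ∉ S),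
            -(eps p T v * eps p T w * c (insert w T)) := by
      rw [bd_apply]
      apply Finset.sum_congr rfl
      intro w hw
      have hwS : w ∉ S := (Finset.mem_filter.1 hw).2
      have hwv : w ≠ v := fun h => hwS (h ▸ hvS)
      have hwT : w ∉ T := fun h => hwS (Finset.erase_subset v S h)
      have herase : (insert w S).erase v = insert w T := by
        rw [hT, Finset.erase_insert_of_ne hwv]
      by_cases hcz : c (insert w T) = 0
      · simp only [DD]
        split
        · rw [herase, hcz]; ring
        · rw [hcz]; ring
      · have hmem := (hc _ hcz).1
        have hsub : insert w T ⊆ α := huniq _ hmem (hβT.trans (Finset.subset_insert w T))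
        have hwα : w ∈ α := hsub (Finset.mem_insert_self w T)
        have hguard : v ∈ insert w S ∧ β ⊆ insert w S ∧ insert w S ⊆ α :=
          ⟨Finset.mem_insert_of_mem hvS, hβS.trans (Finset.subset_insert _ _),
            Finset.insert_subset hwα hSα⟩
        simp only [DD]
        rw [if_pos hguard, herase, ← hins]
        have hs := eps_swap (p := p) (Ne.symm hwv) hvT hwT
        linear_combination c (insert w T) * hs
    have h2 : DD p β α v (bd p c) S
        = c S + ∑ w ∈ Finset.univ.filter (fun w => w ∉ S),
            eps p T v * eps p T w * c (insert w T) := by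
      have hguard : v ∈ S ∧ β ⊆ S ∧ S ⊆ α := ⟨hvS, hβS, hSα⟩
      simp only [DD]
      rw [if_pos hguard, ← hT, bd_apply]
      have hset : Finset.univ.filter (fun w => w ∉ T)
          = insert v (Finset.univ.filter (fun w => w ∉ S)) := by
        ext u
        simp only [Finset.mem_filter, Finset.mem_univ, true_and, Finset.mem_insert, hT,
          Finset.mem_erase]
        tauto
      rw [hset, Finset.sum_insert (by simp [hvS]), mul_add, ← mul_assoc,
        eps_mul_self, one_mul, hins, Finset.mul_sum]
      congr 1
      apply Finset.sum_congr rfl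
      intro w _
      ring
    rw [h1, h2]
    rw [Finset.sum_neg_distrib]
    ring
  · have hDz : DD p β α v (bd p c) S = 0 := by
      simp only [DD]
      rw [if_neg (fun h => hvS h.1)]
    rw [hDz, add_zero, bd_apply]
    rw [Finset.sum_eq_single v]
    · have hguard : v ∈ insert v S ∧ β ⊆ insert v S ∧ insert v S ⊆ α :=
        ⟨Finset.mem_insert_self v S, hβS.trans (Finset.subset_insert _ _),
          Finset.insert_subset hvα hSα⟩
      simp only [DD]
      rw [if_pos hguard, Finset.erase_insert hvS, ← mul_assoc, eps_mul_self, one_mul]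
    · intro w hw hwv
      have hwS : w ∉ S := (Finset.mem_filter.1 hw).2
      simp only [DD]
      rw [if_neg (fun h => (Finset.mem_insert.1 h.1).elim (fun h' => hwv h'.symm) hvS),
        mul_zero]
    · intro h
      exact absurd (Finset.mem_filter.2 ⟨Finset.mem_univ v, hvS⟩) h

lemma chain_mono {Δ Δ' : Finset (Finset V)} (h : Δ' ⊆ Δ) {n : ℕ}
    {c : Finset V → ZMod p} (hc : IsChainOn Δ' n c) : IsChainOn Δ n c :=
  fun Q hQ => ⟨h (hc Q hQ).1, (hc Q hQ).2⟩

lemma chain_add {Δ : Finset (Finset V)} {n : ℕ} {c d : Finset V → ZMod p}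
    (hc : IsChainOn Δ n c) (hd : IsChainOn Δ n d) :
    IsChainOn Δ n (fun Q => c Q + d Q) := by
  intro Q hQ
  by_cases h : c Q = 0
  · refine hd Q (fun h' => hQ ?_)
    simp [h, h']
  · exact hc Q h

lemma chain_sub {Δ : Finset (Finset V)} {n : ℕ} {c d : Finset V → ZMod p}
    (hc : IsChainOn Δ n c) (hd : IsChainOn Δ n d) :
    IsChainOn Δ n (fun Q => c Q - d Q) := by
  intro Q hQ
  by_cases h : c Q = 0
  · refine hd Q (fun h' => hQ ?_)
    simp [h, h']
  · exact hc Q h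

lemma chain_bd {Δ : Finset (Finset V)} (hΔ : IsComplex Δ) {n : ℕ}
    {c : Finset V → ZMod p} (hc : IsChainOn Δ (n + 1) c) :
    IsChainOn Δ n (bd p c) := by
  intro R hR
  have hex : ∃ w ∈ Finset.univ.filter (fun w => w ∉ R),
      eps p R w * c (insert w R) ≠ 0 := by
    by_contra h
    push_neg at h
    exact hR (by rw [bd_apply]; exact Finset.sum_eq_zero h)
  obtain ⟨w, hw, hne⟩ := hex
  have hwR : w ∉ R := (Finset.mem_filter.1 hw).2
  have hcz : c (insert w R) ≠ 0 := fun h => hne (by rw [h, mul_zero])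
  obtain ⟨hmem, hcard⟩ := hc _ hcz
  have hci : (insert w R).card = R.card + 1 := Finset.card_insert_of_notMem hwR
  have hcardR : R.card = n + 1 := by omega
  have hRne : R.Nonempty := Finset.card_pos.1 (by omega)
  exact ⟨(hΔ _ hmem).2 R (Finset.subset_insert w R) hRne, hcardR⟩

lemma chain_DD {Δ : Finset (Finset V)} (hΔ : IsComplex Δ) {β α : Finset V} {v : V}
    (hαΔ : α ∈ Δ) {n : ℕ} {c : Finset V → ZMod p} (hc : IsChainOn Δ n c) :
    IsChainOn Δ (n + 1) (DD p β α v c) := by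
  intro T hT
  simp only [DD] at hT
  by_cases h : v ∈ T ∧ β ⊆ T ∧ T ⊆ α
  · obtain ⟨hvT, hβT, hTα⟩ := h
    rw [if_pos ⟨hvT, hβT, hTα⟩] at hT
    have hcz : c (T.erase v) ≠ 0 := fun hz => hT (by rw [hz, mul_zero])
    obtain ⟨hm, hcard⟩ := hc _ hcz
    refine ⟨(hΔ α hαΔ).2 T hTα ⟨v, hvT⟩, ?_⟩
    have := Finset.card_erase_add_one hvT
    omega
  · rw [if_neg h] at hT
    exact absurd rfl hT

lemma step_chain {Δ : Finset (Finset V)} (hΔ : IsComplex Δ) {β α : Finset V} {v : V}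
    (hαΔ : α ∈ Δ) (huniq : ∀ Q ∈ Δ, β ⊆ Q → Q ⊆ α)
    (hvα : v ∈ α) (hvβ : v ∉ β) {n : ℕ} {c : Finset V → ZMod p}
    (hc : IsChainOn Δ n c)
    (hz : ∀ S : Finset V, β ⊆ S → S ⊆ α → S.card = n + 1 → DD p β α v (bd p c) S = 0) :
    IsChainOn (Δ.filter (fun Q => ¬ β ⊆ Q)) n
      (fun S => c S - bd p (DD p β α v c) S) := by
  intro S hS
  have hbk : IsChainOn Δ n (bd p (DD p β α v c)) := chain_bd hΔ (chain_DD hΔ hαΔ hc)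
  have h1 : S ∈ Δ ∧ S.card = n + 1 := by
    by_cases h : c S = 0
    · refine hbk S (fun hb => hS ?_)
      simp [h, hb]
    · exact hc S h
  refine ⟨Finset.mem_filter.2 ⟨h1.1, ?_⟩, h1.2⟩
  intro hβS
  apply hS
  have hSα := huniq S h1.1 hβS
  have hkey := key (p := p) huniq hvα hvβ hc hβS hSα
  have h0 := hz S hβS hSα h1.2
  linear_combination h0 - hkey

lemma complex_filter {Δ : Finset (Finset V)} (hΔ : IsComplex Δ) (β : Finset V) :
    IsComplex (Δ.filter (fun Q => ¬ β ⊆ Q)) := by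
  intro Q hQ
  obtain ⟨hQΔ, hnβ⟩ := Finset.mem_filter.1 hQ
  refine ⟨(hΔ _ hQΔ).1, fun Q' hsub hne => Finset.mem_filter.2
    ⟨(hΔ _ hQΔ).2 Q' hsub hne, fun hβQ' => hnβ (hβQ'.trans hsub)⟩⟩

lemma step {Δ Δ' : Finset (Finset V)} (hΔ : IsComplex Δ)
    (hec : ElemCollapse Δ Δ') (hac : FpAcyclic Δ' p) : FpAcyclic Δ p := by
  obtain ⟨β, ⟨hβΔ, hβnm, α, ⟨hαmax, hβα⟩, hαuniq⟩, hΔ'⟩ := hec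
  subst hΔ'
  have hαΔ : α ∈ Δ := hαmax.1
  have hβne : β.Nonempty := (hΔ β hβΔ).1
  have hβnea : β ≠ α := fun h => hβnm (h ▸ hαmax)
  have huniq : ∀ Q ∈ Δ, β ⊆ Q → Q ⊆ α := by
    intro Q hQ hβQ
    obtain ⟨R, hRmem, hRmax⟩ := Finset.exists_max_image (Δ.filter (fun X => Q ⊆ X))
      Finset.card ⟨Q, Finset.mem_filter.2 ⟨hQ, Finset.Subset.refl Q⟩⟩
    have hRΔ : R ∈ Δ := (Finset.mem_filter.1 hRmem).1
    have hQR : Q ⊆ R := (Finset.mem_filter.1 hRmem).2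
    have hmax : IsMaximalSimplex Δ R := by
      refine ⟨hRΔ, fun R' hR' hRR' => ?_⟩
      exact (Finset.eq_of_subset_of_card_le hRR'
        (hRmax R' (Finset.mem_filter.2 ⟨hR', hQR.trans hRR'⟩))).symm
    have hRα : R = α := hαuniq R ⟨hmax, hβQ.trans hQR⟩
    exact hRα ▸ hQR
  obtain ⟨v, hvα, hvβ⟩ := Finset.exists_of_ssubset (hβα.ssubset_of_ne hβnea)
  have hsub' : Δ.filter (fun Q => ¬ β ⊆ Q) ⊆ Δ := Finset.filter_subset _ _
  refine ⟨?_, ?_, ?_⟩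
  · obtain ⟨c, hc, ha⟩ := hac.1
    exact ⟨c, chain_mono hsub' hc, ha⟩
  · intro c hc haug
    have hz : ∀ S : Finset V, β ⊆ S → S ⊆ α → S.card = 0 + 1 →
        DD p β α v (bd p c) S = 0 := by
      intro S hβS hSα hcard
      simp only [DD]
      rw [if_neg]
      rintro ⟨hvS, -, -⟩
      obtain ⟨a, rfl⟩ := Finset.card_eq_one.1 hcard
      have hva : v = a := Finset.mem_singleton.1 hvS
      obtain ⟨b, hb⟩ := hβne
      have hba : b = a := Finset.mem_singleton.1 (hβS hb)
      exact hvβ ((hva.trans hba.symm) ▸ hb)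
    have hc2 := step_chain hΔ hαΔ huniq hvα hvβ hc hz
    have he : IsChainOn Δ 1 (DD p β α v c) := chain_DD hΔ hαΔ hc
    have haug2 : aug (fun S => c S - bd p (DD p β α v c) S) = 0 := by
      rw [aug_sub, haug, aug_bd, sub_zero]
    obtain ⟨e', he', hbde'⟩ := hac.2.1 _ hc2 haug2
    refine ⟨fun S => DD p β α v c S + e' S, chain_add he (chain_mono hsub' he'), ?_⟩
    funext S
    rw [bd_add]
    have h3 := congrFun hbde' S
    rw [h3]
    ring
  · intro n hn c hc hcyc
    have hz : ∀ S : Finset V, β ⊆ S → S ⊆ α → S.card = n + 1 →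
        DD p β α v (bd p c) S = 0 := by
      intro S _ _ _
      simp [DD, hcyc]
    have hc2 := step_chain hΔ hαΔ huniq hvα hvβ hc hz
    have he : IsChainOn Δ (n + 1) (DD p β α v c) := chain_DD hΔ hαΔ hc
    have hcyc2 : bd p (fun S => c S - bd p (DD p β α v c) S) = 0 := by
      funext R
      rw [bd_sub, bd_bd, sub_zero, hcyc]
    obtain ⟨e', he', hbde'⟩ := hac.2.2 n hn _ hc2 hcyc2
    refine ⟨fun S => DD p β α v c S + e' S, chain_add he (chain_mono hsub' he'), ?_⟩
    funext S
    rw [bd_add]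
    have h3 := congrFun hbde' S
    rw [h3]
    ring

lemma base (v : V) : FpAcyclic ({({v} : Finset V)} : Finset (Finset V)) p := by
  refine ⟨⟨fun Q => if Q = {v} then 1 else 0, ?_, ?_⟩, ?_, ?_⟩
  · intro Q hQ
    have hQ' : (if Q = ({v} : Finset V) then (1 : ZMod p) else 0) ≠ 0 := hQ
    by_cases h : Q = {v}
    · exact ⟨by simp [h], by simp [h]⟩
    · rw [if_neg h] at hQ'
      exact absurd rfl hQ'
  · unfold aug
    have h1 : ∀ u : V, (if ({u} : Finset V) = {v} then (1 : ZMod p) else 0)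
        = if u = v then 1 else 0 := by
      intro u
      simp [Finset.singleton_inj]
    simp only [h1]
    simp
  · intro c hc haug
    have hcv : ∀ Q, Q ≠ ({v} : Finset V) → c Q = 0 := by
      intro Q h
      by_contra h'
      exact h (Finset.mem_singleton.1 (hc Q h').1)
    have hav : aug c = c {v} := by
      unfold aug
      rw [Finset.sum_eq_single v]
      · intro u _ huv
        exact hcv _ (fun h => huv (Finset.singleton_inj.1 h))
      · intro h
        exact absurd (Finset.mem_univ v) h
    have hc0 : ∀ Q, c Q = 0 := by
      intro Q
      by_cases h : Q = ({v} : Finset V)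
      · rw [h, ← hav, haug]
      · exact hcv Q h
    refine ⟨fun _ => 0, fun Q h => absurd rfl h, ?_⟩
    funext R
    rw [bd_apply, hc0]
    exact Finset.sum_eq_zero (fun w _ => mul_zero _)
  · intro n hn c hc hcyc
    have hc0 : ∀ Q, c Q = 0 := by
      intro Q
      by_contra h
      obtain ⟨hm, hcd⟩ := hc Q h
      rw [Finset.mem_singleton] at hm
      rw [hm, Finset.card_singleton] at hcd
      omega
    refine ⟨fun _ => 0, fun Q h => absurd rfl h, ?_⟩
    funext R
    rw [bd_apply, hc0]
    exact Finset.sum_eq_zero (fun w _ => mul_zero _)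

end Collapse

/-- If a finite abstract simplicial complex is collapsible, then it is
`𝔽_p`-acyclic for every prime `p`. -/
theorem fpAcyclic_of_collapsible {V : Type*} [Fintype V] [LinearOrder V]
    (Δ : Finset (Finset V)) (hΔ : IsComplex Δ) (hcol : Collapsible Δ)
    (p : ℕ) (hp : p.Prime) :
    FpAcyclic Δ p := by
  obtain ⟨v, hct⟩ := hcol
  have main : ∀ {X : Finset (Finset V)}, CollapsesTo X {({v} : Finset V)} →
      IsComplex X → FpAcyclic X p := by
    intro X h
    induction h using Relation.ReflTransGen.head_induction_on with
    | refl => exact fun _ => Collapse.base v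
    | head h' hrest ih =>
      intro hX
      obtain ⟨β, hfree, hEq⟩ := h'
      have hcom : IsComplex _ := hEq ▸ Collapse.complex_filter hX β
      exact Collapse.step hX ⟨β, hfree, hEq⟩ (ih hcom)
  exact main hct hΔ
end

section
/- If a finite abstract simplicial complex Δ is collapsible, then its barycentric subdivision bar(Δ) is collapsible. More generally, if Δ collapses onto a subcomplex Δ', then bar(Δ) collapses onto bar(Δ'). -/
/-- The barycentric subdivision of `Δ`: its simplices are the nonempty chains
of simplices of `Δ` under (strict) inclusion. -/
def bary {V : Type*} [DecidableEq V] (Δ : Finset (Finset V)) :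
    Finset (Finset (Finset V)) :=
  Δ.powerset.filter (fun C => C.Nonempty ∧ ∀ A ∈ C, ∀ B ∈ C, A ⊆ B ∨ B ⊆ A)

section Aux
variable {V : Type*} [DecidableEq V]

lemma chain_sup_mem (F : Finset (Finset V)) (hne : F.Nonempty)
    (hch : ∀ a ∈ F, ∀ b ∈ F, a ⊆ b ∨ b ⊆ a) : F.sup id ∈ F := by
  obtain ⟨M, hM, hmax⟩ := F.exists_max_image Finset.card hne
  have hall : ∀ T ∈ F, T ⊆ M := by
    intro T hT
    rcases hch T hT M hM with h | h
    · exact h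
    · exact (Finset.eq_of_subset_of_card_le h (hmax T hT)).ge
  have hs : F.sup id = M :=
    le_antisymm (Finset.sup_le fun T hT => hall T hT) (Finset.le_sup (f := id) hM)
  rw [hs]; exact hM

lemma master : ∀ (n : ℕ) (K K' : Finset (Finset V)), K.card ≤ n → K' ⊆ K →
    ∀ (S : Finset (Finset V)) (b : Finset V → Finset V) (m : Finset V → ℕ),
    (∀ γ ∈ S, γ ∈ K ∧ b γ ∈ K ∧ γ ⊂ b γ ∧ m (b γ) = m γ ∧ γ ∉ K' ∧ b γ ∉ K') →
    (∀ δ ∈ K, δ ∉ K' → δ ∈ S ∨ ∃ γ ∈ S, δ = b γ) →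
    (∀ γ ∈ S, b γ ∉ S) →
    (∀ γ ∈ S, ∀ γ' ∈ S, b γ = b γ' → γ = γ') →
    (∀ γ ∈ S, ∀ δ ∈ K, γ ⊂ δ → δ = b γ ∨ (δ ∉ K' ∧ m γ < m δ)) →
    CollapsesTo K K' := by
  intro n
  induction n with
  | zero =>
    intro K K' hcard hsub S b m _ _ _ _ _
    have : K = ∅ := Finset.card_eq_zero.mp (Nat.le_zero.mp hcard)
    subst this
    have : K' = ∅ := Finset.subset_empty.mp hsub
    subst this
    exact Relation.ReflTransGen.refl
  | succ n ih =>
    intro K K' hcard hsub S b m hS hcover hbS hinj hkey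
    by_cases hSne : S.Nonempty
    · obtain ⟨γ, hγS, hγmax⟩ := S.exists_max_image m hSne
      obtain ⟨hγK, hbK, hγb, hmb, hγK', hbK'⟩ := hS γ hγS
      -- cofaces of γ are only γ and b γ
      have hcof : ∀ δ ∈ K, γ ⊆ δ → δ = γ ∨ δ = b γ := by
        intro δ hδ hγδ
        by_cases hδγ : δ = γ
        · exact Or.inl hδγ
        · have hss : γ ⊂ δ := ⟨hγδ, fun h => hδγ (Finset.Subset.antisymm h hγδ)⟩
          rcases hkey γ hγS δ hδ hss with h | ⟨hδK', hlt⟩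
          · exact Or.inr h
          · exfalso
            rcases hcover δ hδ hδK' with hδS | ⟨γ', hγ'S, rfl⟩
            · exact absurd (hγmax δ hδS) (not_le.mpr hlt)
            · rw [(hS γ' hγ'S).2.2.2.1] at hlt
              exact absurd (hγmax γ' hγ'S) (not_le.mpr hlt)
      have hbmax : IsMaximalSimplex K (b γ) := by
        refine ⟨hbK, fun R hR hbR => ?_⟩
        rcases hcof R hR (hγb.1.trans hbR) with h | h
        · exact absurd (h ▸ hbR) hγb.2
        · exact h
      have hfree : IsFreeFace K γ := by
        refine ⟨hγK, ?_, ⟨b γ, ⟨hbmax, hγb.1⟩, ?_⟩⟩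
        · intro hmax
          exact hγb.2 (subset_of_eq (hmax.2 (b γ) hbK hγb.1))
        · rintro y ⟨hymax, hγy⟩
          rcases hcof y hymax.1 hγy with h | h
          · exfalso
            have hby : b γ = y := hymax.2 (b γ) hbK (by rw [h]; exact hγb.1)
            exact hγb.2 (subset_of_eq (hby.trans h))
          · exact h
      set K₂ := K.filter (fun Q => ¬ γ ⊆ Q) with hK₂
      have hmemK₂ : ∀ δ, δ ∈ K₂ ↔ δ ∈ K ∧ δ ≠ γ ∧ δ ≠ b γ := by
        intro δ
        simp only [hK₂, Finset.mem_filter]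
        constructor
        · rintro ⟨hδ, hns⟩
          refine ⟨hδ, ?_, ?_⟩
          · rintro rfl; exact hns (subset_refl _)
          · rintro rfl; exact hns hγb.1
        · rintro ⟨hδ, h1, h2⟩
          refine ⟨hδ, fun hsub' => ?_⟩
          rcases hcof δ hδ hsub' with h | h
          · exact h1 h
          · exact h2 h
      have hstep : ElemCollapse K K₂ := ⟨γ, hfree, rfl⟩
      have hK₂sub : K' ⊆ K₂ := by
        intro δ hδ
        rw [hmemK₂]
        exact ⟨hsub hδ, fun h => hγK' (h ▸ hδ), fun h => hbK' (h ▸ hδ)⟩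
      have hcardlt : K₂.card ≤ n := by
        have : K₂ ⊂ K := by
          refine Finset.ssubset_iff_of_subset (Finset.filter_subset _ _) |>.mpr ?_
          exact ⟨γ, hγK, by rw [hmemK₂]; tauto⟩
        exact Nat.lt_succ_iff.mp (lt_of_lt_of_le (Finset.card_lt_card this) hcard)
      refine Relation.ReflTransGen.head hstep
        (ih K₂ K' hcardlt hK₂sub (S.erase γ) b m ?_ ?_ ?_ ?_ ?_)
      · intro γ' hγ'
        obtain ⟨hne, hγ'S⟩ := Finset.mem_erase.mp hγ'
        obtain ⟨h1, h2, h3, h4, h5, h6⟩ := hS γ' hγ'S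
        refine ⟨?_, ?_, h3, h4, h5, h6⟩
        · rw [hmemK₂]
          exact ⟨h1, hne, fun h => hbS γ hγS (h ▸ hγ'S)⟩
        · rw [hmemK₂]
          exact ⟨h2, fun h => hbS γ' hγ'S (h ▸ hγS), fun h => hne (hinj γ' hγ'S γ hγS h)⟩
      · intro δ hδ hδK'
        have hδK : δ ∈ K := ((hmemK₂ δ).mp hδ).1
        rcases hcover δ hδK hδK' with h | ⟨γ'', hγ'', rfl⟩
        · exact Or.inl (Finset.mem_erase.mpr ⟨((hmemK₂ δ).mp hδ).2.1, h⟩)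
        · refine Or.inr ⟨γ'', Finset.mem_erase.mpr ⟨?_, hγ''⟩, rfl⟩
          intro h
          exact ((hmemK₂ _).mp hδ).2.2 (by rw [h])
      · intro γ' h
        exact fun hmem => hbS γ' (Finset.mem_erase.mp h).2 (Finset.mem_erase.mp hmem).2
      · intro a ha a' ha' h
        exact hinj a (Finset.mem_erase.mp ha).2 a' (Finset.mem_erase.mp ha').2 h
      · intro γ' hγ' δ hδ hss
        exact hkey γ' (Finset.mem_erase.mp hγ').2 δ ((hmemK₂ δ).mp hδ).1 hss
    · -- S empty : K = K'
      have : K = K' := by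
        apply Finset.Subset.antisymm _ hsub
        intro δ hδ
        by_contra hδK'
        rcases hcover δ hδ hδK' with h | ⟨γ', hγ', _⟩
        · exact hSne ⟨δ, h⟩
        · exact hSne ⟨γ', hγ'⟩
      rw [this]
      exact Relation.ReflTransGen.refl
end Aux
section PairBar
variable {V : Type*} [DecidableEq V]

lemma mem_bary {Δ C : Finset (Finset V)} :
    C ∈ bary Δ ↔ C ⊆ Δ ∧ C.Nonempty ∧ ∀ A ∈ C, ∀ B ∈ C, A ⊆ B ∨ B ⊆ A := by
  simp [bary, Finset.mem_filter, Finset.mem_powerset, and_assoc]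

/-- auxiliary: the x-free part of a chain -/
def Fx (x : V) (C : Finset (Finset V)) : Finset (Finset V) := C.filter (fun R => x ∉ R)

def qx (x : V) (P : Finset V) (C : Finset (Finset V)) : Finset V :=
  if P ∈ C then insert x P else insert x ((Fx x C).sup id)

def rx (x : V) (P : Finset V) (N : ℕ) (C : Finset (Finset V)) : ℕ :=
  if P ∈ C then N else ((Fx x C).sup id).card

def mx (x : V) (P : Finset V) (N : ℕ) (C : Finset (Finset V)) : ℕ :=
  rx x P N C * N + (C.erase (qx x P C)).card

lemma Fx_insert_of_mem (x : V) (C : Finset (Finset V)) (T : Finset V) (hT : x ∈ T) :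
    Fx x (insert T C) = Fx x C := by
  unfold Fx
  rw [Finset.filter_insert, if_neg (by simp [hT])]

lemma Fx_erase_of_mem (x : V) (C : Finset (Finset V)) (T : Finset V) (hT : x ∈ T) :
    Fx x (C.erase T) = Fx x C := by
  unfold Fx
  ext R
  simp only [Finset.mem_filter, Finset.mem_erase]
  constructor
  · rintro ⟨⟨_, h⟩, h2⟩; exact ⟨h, h2⟩
  · rintro ⟨h, h2⟩
    exact ⟨⟨fun hRT => h2 (hRT ▸ hT), h⟩, h2⟩

lemma fin_helper {t : Finset V} {γ δ : Finset (Finset V)} (hss : γ ⊂ δ) (ht : t ∉ γ) :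
    δ = insert t γ ∨ γ.card < (δ.erase t).card := by
  have h1 : γ ⊆ δ.erase t := Finset.subset_erase.mpr ⟨hss.1, ht⟩
  by_cases h2 : δ.erase t = γ
  · left
    obtain ⟨y, hyδ, hyγ⟩ := Finset.exists_of_ssubset hss
    have hyt : y = t := by
      by_contra hyt
      exact hyγ (h2 ▸ Finset.mem_erase.mpr ⟨hyt, hyδ⟩)
    subst hyt
    rw [← h2, Finset.insert_erase hyδ]
  · right
    exact Finset.card_lt_card (ssubset_of_subset_of_ne h1 (Ne.symm h2))

lemma pair_bar (K : Finset (Finset V)) (P : Finset V) (x : V)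
    (hx : x ∉ P) (hPne : P.Nonempty) (hPK : P ∈ K)
    (hup : ∀ R ∈ K, P ⊆ R → R = P ∨ R = insert x P)
    (hdown : ∀ S : Finset V, S ⊆ insert x P → S.Nonempty → S ∈ K) :
    CollapsesTo (bary K) (bary (K.filter (fun R => ¬ P ⊆ R))) := by
  set A : Finset V := insert x P with hA
  set N : ℕ := K.card + P.card + 2 with hN
  set K' : Finset (Finset V) := K.filter (fun R => ¬ P ⊆ R) with hK'
  set Sm : Finset (Finset (Finset V)) :=
    (bary K).filter (fun C => (P ∈ C ∨ A ∈ C) ∧ qx x P C ∉ C) with hSm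
  have hAK : A ∈ K := hdown A (subset_refl _) ⟨x, Finset.mem_insert_self x P⟩
  have hPA : P ⊆ A := Finset.subset_insert x P
  have hxA : x ∈ A := Finset.mem_insert_self x P
  have hPneA : P ≠ A := fun h => hx (h ▸ hxA)
  have hAmax : ∀ R ∈ K, A ⊆ R → R = A := by
    intro R hR hAR
    rcases hup R hR (hPA.trans hAR) with rfl | rfl
    · exact absurd (hAR hxA) hx
    · rfl
  -- membership in bary K' characterization
  have hnotK' : ∀ C ∈ bary K, (C ∉ bary K' ↔ (P ∈ C ∨ A ∈ C)) := by
    intro C hC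
    obtain ⟨hCK, hCne, hch⟩ := mem_bary.mp hC
    constructor
    · intro h
      by_contra hcon
      push_neg at hcon
      apply h
      rw [mem_bary]
      refine ⟨?_, hCne, hch⟩
      intro R hR
      rw [hK', Finset.mem_filter]
      refine ⟨hCK hR, fun hPR => ?_⟩
      rcases hup R (hCK hR) hPR with rfl | rfl
      exacts [hcon.1 hR, hcon.2 hR]
    · rintro (h | h) hmem
      · exact (Finset.mem_filter.mp ((mem_bary.mp hmem).1 h)).2 (subset_refl P)
      · exact (Finset.mem_filter.mp ((mem_bary.mp hmem).1 h)).2 hPA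
  -- facts about chains containing A but not P
  have hMb : ∀ C ∈ bary K, A ∈ C → P ∉ C →
      (Fx x C).sup id ⊆ P ∧ qx x P C = insert x ((Fx x C).sup id) ∧
      qx x P C ⊆ A ∧ qx x P C ∈ K ∧ qx x P C ≠ P ∧ qx x P C ≠ A ∧
      (∀ R ∈ C, R ⊆ qx x P C ∨ qx x P C ⊆ R) := by
    intro C hC hAC hPC
    obtain ⟨hCK, hCne, hch⟩ := mem_bary.mp hC
    have hsubA : ∀ R ∈ C, R ⊆ A := by
      intro R hR
      rcases hch R hR A hAC with h | h
      · exact h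
      · exact (hAmax R (hCK hR) h).le
    have hFsub : ∀ T ∈ Fx x C, T ⊆ P := by
      intro T hT
      obtain ⟨hTC, hxT⟩ := Finset.mem_filter.mp hT
      have := Finset.subset_insert_iff.mp (hsubA T hTC)
      rwa [Finset.erase_eq_of_notMem hxT] at this
    have hSP : (Fx x C).sup id ⊆ P := Finset.sup_le fun T hT => hFsub T hT
    have hqdef : qx x P C = insert x ((Fx x C).sup id) := if_neg hPC
    have hqA : qx x P C ⊆ A := by
      rw [hqdef, hA]
      exact Finset.insert_subset_insert x hSP
    have hxq : x ∈ qx x P C := by rw [hqdef]; exact Finset.mem_insert_self _ _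
    have hqK : qx x P C ∈ K := hdown _ hqA ⟨x, hxq⟩
    have hqNeP : qx x P C ≠ P := fun h => hx (h ▸ hxq)
    have hqNeA : qx x P C ≠ A := by
      intro h
      have hPS : (Fx x C).sup id = P := by
        apply Finset.Subset.antisymm hSP
        intro p hp
        have : p ∈ qx x P C := h ▸ (hPA hp)
        rw [hqdef] at this
        rcases Finset.mem_insert.mp this with rfl | hm
        · exact absurd hp hx
        · exact hm
      by_cases hFne : (Fx x C).Nonempty
      · have hmem := chain_sup_mem (Fx x C) hFne
          (fun a ha b hb => hch a (Finset.mem_filter.mp ha).1 b (Finset.mem_filter.mp hb).1)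
        rw [hPS] at hmem
        exact hPC (Finset.mem_filter.mp hmem).1
      · rw [Finset.not_nonempty_iff_eq_empty.mp hFne, Finset.sup_empty] at hPS
        exact hPne.ne_empty hPS.symm
    have hcomp : ∀ R ∈ C, R ⊆ qx x P C ∨ qx x P C ⊆ R := by
      intro R hR
      by_cases hxR : x ∈ R
      · right
        rw [hqdef]
        refine Finset.insert_subset hxR (Finset.sup_le fun T hT => ?_)
        rcases hch T (Finset.mem_filter.mp hT).1 R hR with h | h
        · exact h
        · exact absurd (h hxR) (Finset.mem_filter.mp hT).2
      · left
        rw [hqdef]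
        exact (Finset.le_sup (f := id) (Finset.mem_filter.mpr ⟨hR, hxR⟩)).trans
          (Finset.subset_insert _ _)
    exact ⟨hSP, hqdef, hqA, hqK, hqNeP, hqNeA, hcomp⟩
  -- facts about chains containing P
  have hMa : ∀ C ∈ bary K, P ∈ C → ∀ R ∈ C, R ⊆ A := by
    intro C hC hPC R hR
    obtain ⟨hCK, hCne, hch⟩ := mem_bary.mp hC
    rcases hch R hR P hPC with h | h
    · exact h.trans hPA
    · rcases hup R (hCK hR) h with rfl | rfl
      · exact hPA
      · exact subset_refl _
  -- generic small facts about qx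
  have hxq : ∀ C : Finset (Finset V), x ∈ qx x P C := by
    intro C
    rw [qx]
    split <;> exact Finset.mem_insert_self _ _
  have hqNeP : ∀ C : Finset (Finset V), qx x P C ≠ P := by
    intro C h
    exact hx (h ▸ hxq C)
  have hqMa : ∀ C : Finset (Finset V), P ∈ C → qx x P C = A := by
    intro C h
    rw [qx, if_pos h, hA]
  have hq_ins : ∀ C : Finset (Finset V), qx x P (insert (qx x P C) C) = qx x P C := by
    intro C
    by_cases hPC : P ∈ C
    · rw [qx, if_pos (Finset.mem_insert_of_mem hPC), qx, if_pos hPC]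
    · have hPnotins : P ∉ insert (qx x P C) C := by
        rw [Finset.mem_insert]
        rintro (h | h)
        · exact hx (h ▸ hxq C)
        · exact hPC h
      rw [qx, if_neg hPnotins, Fx_insert_of_mem x C _ (hxq C), qx, if_neg hPC]
  have hq_erase : ∀ C : Finset (Finset V), qx x P (C.erase (qx x P C)) = qx x P C := by
    intro C
    by_cases hPC : P ∈ C
    · have hPe : P ∈ C.erase (qx x P C) :=
        Finset.mem_erase.mpr ⟨fun h => hx (h ▸ hxq C), hPC⟩
      rw [qx, if_pos hPe, qx, if_pos hPC]
    · have hPe : P ∉ C.erase (qx x P C) := fun h => hPC (Finset.mem_of_mem_erase h)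
      rw [qx, if_neg hPe, Fx_erase_of_mem x C _ (hxq C), qx, if_neg hPC]
  have hr_ins : ∀ C : Finset (Finset V), rx x P N (insert (qx x P C) C) = rx x P N C := by
    intro C
    by_cases hPC : P ∈ C
    · rw [rx, if_pos (Finset.mem_insert_of_mem hPC), rx, if_pos hPC]
    · have hPnotins : P ∉ insert (qx x P C) C := by
        rw [Finset.mem_insert]
        rintro (h | h)
        · exact hx (h ▸ hxq C)
        · exact hPC h
      rw [rx, if_neg hPnotins, Fx_insert_of_mem x C _ (hxq C), rx, if_neg hPC]
  have hm_ins : ∀ C : Finset (Finset V), qx x P C ∉ C →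
      mx x P N (insert (qx x P C) C) = mx x P N C := by
    intro C hqC
    rw [mx, mx, hr_ins C, hq_ins C, Finset.erase_insert hqC, Finset.erase_eq_of_notMem hqC]
  -- chain extension
  have hchain_ext : ∀ (γ : Finset (Finset V)) (t : Finset V),
      (∀ a ∈ γ, ∀ b ∈ γ, a ⊆ b ∨ b ⊆ a) → (∀ R ∈ γ, R ⊆ t ∨ t ⊆ R) →
      ∀ a ∈ insert t γ, ∀ b ∈ insert t γ, a ⊆ b ∨ b ⊆ a := by
    intro γ t hch hcmp a ha b hb
    rcases Finset.mem_insert.mp ha with ha' | ha'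
    · rcases Finset.mem_insert.mp hb with hb' | hb'
      · rw [ha', hb']
        exact Or.inl (subset_refl _)
      · rw [ha']
        exact (hcmp b hb').symm
    · rcases Finset.mem_insert.mp hb with hb' | hb'
      · rw [hb']
        exact hcmp a ha'
      · exact hch a ha' b hb'
  -- Sm membership
  have hSmmem : ∀ γ : Finset (Finset V),
      γ ∈ Sm ↔ γ ∈ bary K ∧ (P ∈ γ ∨ A ∈ γ) ∧ qx x P γ ∉ γ := by
    intro γ
    rw [hSm, Finset.mem_filter]
  -- b γ is a chain in bary K
  have hbmem : ∀ γ ∈ Sm, insert (qx x P γ) γ ∈ bary K := by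
    intro γ hγ
    obtain ⟨hγK, hPAγ, hqγ⟩ := (hSmmem γ).mp hγ
    obtain ⟨hγsub, hγne, hγch⟩ := mem_bary.mp hγK
    by_cases hPγ : P ∈ γ
    · rw [mem_bary]
      refine ⟨?_, ⟨P, Finset.mem_insert_of_mem hPγ⟩, ?_⟩
      · intro R hR
        rcases Finset.mem_insert.mp hR with rfl | hR
        · rw [hqMa γ hPγ]; exact hAK
        · exact hγsub hR
      · apply hchain_ext γ _ hγch
        intro R hR
        rw [hqMa γ hPγ]
        exact Or.inl (hMa γ hγK hPγ R hR)
    · have hAγ : A ∈ γ := hPAγ.resolve_left hPγ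
      obtain ⟨_, _, _, hqK, _, _, hcomp⟩ := hMb γ hγK hAγ hPγ
      rw [mem_bary]
      refine ⟨?_, ⟨A, Finset.mem_insert_of_mem hAγ⟩, hchain_ext γ _ hγch hcomp⟩
      intro R hR
      rcases Finset.mem_insert.mp hR with rfl | hR
      · exact hqK
      · exact hγsub hR
  -- arithmetic helper
  have harith : ∀ (r1 r2 e1 e2 : ℕ), e1 < N → r1 < r2 → r1 * N + e1 < r2 * N + e2 := by
    intro r1 r2 e1 e2 he hr
    calc r1 * N + e1 < r1 * N + N := by omega
    _ = (r1 + 1) * N := by ring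
    _ ≤ r2 * N := Nat.mul_le_mul_right N hr
    _ ≤ r2 * N + e2 := Nat.le_add_right _ _
  have hcardN : ∀ C ∈ bary K, C.card < N := by
    intro C hC
    have := Finset.card_le_card (mem_bary.mp hC).1
    omega
  have hrMbbound : ∀ C ∈ bary K, A ∈ C → P ∉ C → rx x P N C < N := by
    intro C hC hAC hPC
    obtain ⟨hSP, _, _, _, _, _, _⟩ := hMb C hC hAC hPC
    have := Finset.card_le_card hSP
    rw [rx, if_neg hPC]
    omega
  -- apply the master lemma
  apply master (bary K).card (bary K) (bary K') le_rfl
    (fun C hC => mem_bary.mpr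
      ⟨(mem_bary.mp hC).1.trans (Finset.filter_subset _ _), (mem_bary.mp hC).2⟩)
    Sm (fun C => insert (qx x P C) C) (mx x P N)
  · -- hS
    intro γ hγ
    obtain ⟨hγK, hPAγ, hqγ⟩ := (hSmmem γ).mp hγ
    have hbK := hbmem γ hγ
    refine ⟨hγK, hbK, Finset.ssubset_insert hqγ, hm_ins γ hqγ, ?_, ?_⟩
    · exact (hnotK' γ hγK).mpr hPAγ
    · refine (hnotK' _ hbK).mpr ?_
      rcases hPAγ with h | h
      · exact Or.inl (Finset.mem_insert_of_mem h)
      · exact Or.inr (Finset.mem_insert_of_mem h)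
  · -- hcover
    intro δ hδ hδK'
    have hPAδ := (hnotK' δ hδ).mp hδK'
    by_cases hqδ : qx x P δ ∉ δ
    · exact Or.inl ((hSmmem δ).mpr ⟨hδ, hPAδ, hqδ⟩)
    · push_neg at hqδ
      right
      refine ⟨δ.erase (qx x P δ), ?_, ?_⟩
      · rw [hSmmem]
        obtain ⟨hδsub, hδne, hδch⟩ := mem_bary.mp hδ
        have hPA' : P ∈ δ.erase (qx x P δ) ∨ A ∈ δ.erase (qx x P δ) := by
          rcases hPAδ with h | h
          · exact Or.inl (Finset.mem_erase.mpr ⟨fun he => hqNeP δ he.symm, h⟩)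
          · by_cases hPδ : P ∈ δ
            · exact Or.inl (Finset.mem_erase.mpr ⟨fun he => hqNeP δ he.symm, hPδ⟩)
            · obtain ⟨_, _, _, _, _, hqNeA, _⟩ := hMb δ hδ h hPδ
              exact Or.inr (Finset.mem_erase.mpr ⟨fun he => hqNeA he.symm, h⟩)
        refine ⟨?_, ?_, ?_⟩
        · rw [mem_bary]
          refine ⟨(Finset.erase_subset _ _).trans hδsub, ?_, ?_⟩
          · rcases hPA' with h | h
            exacts [⟨P, h⟩, ⟨A, h⟩]
          · intro a ha b hb
            exact hδch a (Finset.mem_of_mem_erase ha) b (Finset.mem_of_mem_erase hb)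
        · exact hPA'
        · rw [hq_erase δ]
          exact Finset.notMem_erase _ _
      · rw [hq_erase δ, Finset.insert_erase hqδ]
  · -- hbS
    intro γ hγ hbγ
    obtain ⟨_, _, hq'⟩ := (hSmmem _).mp hbγ
    rw [hq_ins γ] at hq'
    exact hq' (Finset.mem_insert_self _ _)
  · -- hinj
    intro γ hγ γ' hγ' heq
    obtain ⟨_, _, hqγ⟩ := (hSmmem γ).mp hγ
    obtain ⟨_, _, hqγ'⟩ := (hSmmem γ').mp hγ'
    have h1 : γ = (insert (qx x P γ) γ).erase (qx x P (insert (qx x P γ) γ)) := by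
      rw [hq_ins γ, Finset.erase_insert hqγ]
    have h2 : γ' = (insert (qx x P γ') γ').erase (qx x P (insert (qx x P γ') γ')) := by
      rw [hq_ins γ', Finset.erase_insert hqγ']
    rw [h1, h2, heq]
  · -- hkey
    intro γ hγ δ hδ hss
    obtain ⟨hγK, hPAγ, hqγ⟩ := (hSmmem γ).mp hγ
    have hδK' : δ ∉ bary K' := by
      apply (hnotK' δ hδ).mpr
      rcases hPAγ with h | h
      · exact Or.inl (hss.1 h)
      · exact Or.inr (hss.1 h)
    by_cases hPγ : P ∈ γ
    · -- r δ = r γ = N, q γ = q δ = A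
      have hPδ : P ∈ δ := hss.1 hPγ
      have hqγA : qx x P γ = A := hqMa γ hPγ
      have hqδA : qx x P δ = A := hqMa δ hPδ
      rcases fin_helper hss (hqγA ▸ hqγ) with h | h
      · exact Or.inl (by rw [h, hqγA])
      · refine Or.inr ⟨hδK', ?_⟩
        rw [mx, mx, rx, rx, if_pos hPγ, if_pos hPδ, hqγA, hqδA,
          Finset.erase_eq_of_notMem (hqγA ▸ hqγ)]
        have := hcardN γ hγK
        omega
    · have hAγ : A ∈ γ := hPAγ.resolve_left hPγ
      by_cases hPδ : P ∈ δ
      · -- r jumps to N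
        refine Or.inr ⟨hδK', ?_⟩
        have h1 : rx x P N γ < N := hrMbbound γ hγK hAγ hPγ
        have h2 : (γ.erase (qx x P γ)).card < N := by
          have h3 := Finset.card_le_card (Finset.erase_subset (qx x P γ) γ)
          have := hcardN γ hγK
          omega
        have hrδ : rx x P N δ = N := by rw [rx, if_pos hPδ]
        rw [mx, mx, hrδ]
        exact harith _ _ _ _ h2 h1
      · -- both in Mb
        have hAδ : A ∈ δ := hss.1 hAγ
        obtain ⟨hSPγ, hqdefγ, _, _, _, _, _⟩ := hMb γ hγK hAγ hPγ
        obtain ⟨hSPδ, hqdefδ, _, _, _, _, _⟩ := hMb δ hδ hAδ hPδ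
        have hFmono : Fx x γ ⊆ Fx x δ := Finset.filter_subset_filter _ hss.1
        have hsupmono : (Fx x γ).sup id ⊆ (Fx x δ).sup id := Finset.sup_mono hFmono
        by_cases hrc : ((Fx x δ).sup id).card ≤ ((Fx x γ).sup id).card
        · -- sups equal, same q
          have hsupeq : (Fx x γ).sup id = (Fx x δ).sup id :=
            Finset.eq_of_subset_of_card_le hsupmono hrc
          have hqeq : qx x P δ = qx x P γ := by rw [hqdefδ, hqdefγ, hsupeq]
          rcases fin_helper hss hqγ with h | h
          · exact Or.inl h
          · refine Or.inr ⟨hδK', ?_⟩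
            rw [mx, mx, rx, rx, if_neg hPγ, if_neg hPδ, hsupeq, hqeq,
              Finset.erase_eq_of_notMem hqγ]
            omega
        · -- strict sup growth
          push_neg at hrc
          refine Or.inr ⟨hδK', ?_⟩
          have h2 : (γ.erase (qx x P γ)).card < N := by
            have h3 := Finset.card_le_card (Finset.erase_subset (qx x P γ) γ)
            have := hcardN γ hγK
            omega
          rw [mx, mx, rx, rx, if_neg hPγ, if_neg hPδ]
          exact harith _ _ _ _ h2 hrc
end PairBar
section Step
variable {V : Type*} [DecidableEq V]

lemma exists_max_containing (Δ : Finset (Finset V)) (R : Finset V) (hR : R ∈ Δ) :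
    ∃ M, IsMaximalSimplex Δ M ∧ R ⊆ M := by
  obtain ⟨M, hM, hmax⟩ := (Δ.filter (fun Q => R ⊆ Q)).exists_max_image Finset.card
    ⟨R, Finset.mem_filter.mpr ⟨hR, subset_refl R⟩⟩
  obtain ⟨hMΔ, hRM⟩ := Finset.mem_filter.mp hM
  refine ⟨M, ⟨hMΔ, fun R' hR' hMR' => ?_⟩, hRM⟩
  have hmem : R' ∈ Δ.filter (fun Q => R ⊆ Q) :=
    Finset.mem_filter.mpr ⟨hR', hRM.trans hMR'⟩
  exact (Finset.eq_of_subset_of_card_le hMR' (hmax R' hmem)).symm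

lemma elem_preserves {Δ Δ₂ : Finset (Finset V)} (h : ElemCollapse Δ Δ₂)
    (hΔ : IsComplex Δ) : IsComplex Δ₂ := by
  obtain ⟨β, _, rfl⟩ := h
  intro Q hQ
  obtain ⟨hQΔ, hQn⟩ := Finset.mem_filter.mp hQ
  refine ⟨(hΔ Q hQΔ).1, fun Q' hQ' hQ'ne => ?_⟩
  exact Finset.mem_filter.mpr ⟨(hΔ Q hQΔ).2 Q' hQ' hQ'ne, fun hβ => hQn (hβ.trans hQ')⟩

lemma step_bar (Δ Δ₂ : Finset (Finset V)) (hΔ : IsComplex Δ) (h : ElemCollapse Δ Δ₂) :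
    CollapsesTo (bary Δ) (bary Δ₂) := by
  obtain ⟨β, ⟨hβΔ, hβnm, hex⟩, rfl⟩ := h
  obtain ⟨α, ⟨hαmax, hβα⟩, huniq⟩ := hex
  set Δ'' := Δ.filter (fun Q => ¬ β ⊆ Q) with hΔ''
  have hβne : β.Nonempty := (hΔ β hβΔ).1
  have hcontain : ∀ R ∈ Δ, β ⊆ R → R ⊆ α := by
    intro R hR hβR
    obtain ⟨M, hM, hRM⟩ := exists_max_containing Δ R hR
    exact (huniq M ⟨hM, hβR.trans hRM⟩) ▸ hRM
  have hβα' : β ≠ α := by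
    rintro rfl
    exact hβnm hαmax
  obtain ⟨x, hxα, hxβ⟩ := Finset.exists_of_ssubset (ssubset_of_subset_of_ne hβα hβα')
  have hsubmem : ∀ R : Finset V, R ⊆ α → R.Nonempty → R ∈ Δ :=
    fun R h1 h2 => (hΔ α hαmax.1).2 R h1 h2
  have main : ∀ (n : ℕ) (J : Finset (Finset V)), J.card ≤ n →
      (∀ R ∈ J, R ∈ Δ ∧ β ⊆ R) →
      (∀ R ∈ J, ∀ R', β ⊆ R' → R' ⊆ α → R'.erase x ⊆ R.erase x → R' ∈ J) →
      CollapsesTo (bary (Δ'' ∪ J)) (bary Δ'') := by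
    intro n
    induction n with
    | zero =>
      intro J hc _ _
      rw [Finset.card_eq_zero.mp (Nat.le_zero.mp hc), Finset.union_empty]
      exact Relation.ReflTransGen.refl
    | succ n ih =>
      intro J hcard hJI hD
      by_cases hJne : J.Nonempty
      · -- pick an x-free element of maximal cardinality
        have hJfne : (J.filter (fun R => x ∉ R)).Nonempty := by
          obtain ⟨R, hR⟩ := hJne
          have h1 : β ⊆ R.erase x := Finset.subset_erase.mpr ⟨(hJI R hR).2, hxβ⟩
          have h2 : R.erase x ∈ J := hD R hR (R.erase x) h1
            ((Finset.erase_subset _ _).trans (hcontain R (hJI R hR).1 (hJI R hR).2))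
            (Finset.erase_subset_erase x (Finset.erase_subset _ _))
          exact ⟨R.erase x, Finset.mem_filter.mpr ⟨h2, Finset.notMem_erase _ _⟩⟩
        obtain ⟨Q, hQf, hQmax⟩ :=
          (J.filter (fun R => x ∉ R)).exists_max_image Finset.card hJfne
        obtain ⟨hQJ, hxQ⟩ := Finset.mem_filter.mp hQf
        have hQcard : ∀ T ∈ J, x ∉ T → T.card ≤ Q.card := by
          intro T hT hxT
          exact hQmax T (Finset.mem_filter.mpr ⟨hT, hxT⟩)
        have hQΔ := (hJI Q hQJ).1
        have hβQ := (hJI Q hQJ).2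
        have hQα : Q ⊆ α := hcontain Q hQΔ hβQ
        have hQne : Q.Nonempty := hβne.mono hβQ
        have hAα : insert x Q ⊆ α := Finset.insert_subset hxα hQα
        have hQeq : Q.erase x = Q := Finset.erase_eq_of_notMem hxQ
        have hAJ : insert x Q ∈ J := by
          apply hD Q hQJ _ (hβQ.trans (Finset.subset_insert _ _)) hAα
          rw [Finset.erase_insert hxQ, hQeq]
        have hKcJ : ∀ R ∈ Δ'' ∪ J, β ⊆ R → R ∈ J := by
          intro R hR hβR
          rcases Finset.mem_union.mp hR with h | h
          · exact absurd hβR (Finset.mem_filter.mp h).2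
          · exact h
        have hup : ∀ R ∈ Δ'' ∪ J, Q ⊆ R → R = Q ∨ R = insert x Q := by
          intro R hR hQR
          have hRJ : R ∈ J := hKcJ R hR (hβQ.trans hQR)
          by_cases hxR : x ∈ R
          · right
            have h1 : β ⊆ R.erase x := Finset.subset_erase.mpr ⟨(hJI R hRJ).2, hxβ⟩
            have h2 : R.erase x ∈ J := hD R hRJ (R.erase x) h1
              ((Finset.erase_subset _ _).trans (hcontain R (hJI R hRJ).1 (hJI R hRJ).2))
              (Finset.erase_subset_erase x (Finset.erase_subset _ _))
            have h3 : Q ⊆ R.erase x := Finset.subset_erase.mpr ⟨hQR, hxQ⟩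
            have h4 : Q = R.erase x := Finset.eq_of_subset_of_card_le h3
              (hQcard _ h2 (Finset.notMem_erase _ _))
            rw [← Finset.insert_erase hxR, ← h4]
          · left
            exact (Finset.eq_of_subset_of_card_le hQR (hQcard R hRJ hxR)).symm
        have hdown : ∀ S : Finset V, S ⊆ insert x Q → S.Nonempty → S ∈ Δ'' ∪ J := by
          intro S hS hSne
          have hSΔ : S ∈ Δ := hsubmem S (hS.trans hAα) hSne
          by_cases hβS : β ⊆ S
          · refine Finset.mem_union_right _ (hD Q hQJ S hβS (hS.trans hAα) ?_)
            rw [hQeq]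
            exact Finset.subset_insert_iff.mp hS
          · exact Finset.mem_union_left _ (Finset.mem_filter.mpr ⟨hSΔ, hβS⟩)
        have hpb := pair_bar (Δ'' ∪ J) Q x hxQ hQne (Finset.mem_union_right _ hQJ) hup hdown
        have hKc' : (Δ'' ∪ J).filter (fun R => ¬ Q ⊆ R) =
            Δ'' ∪ ((J.erase (insert x Q)).erase Q) := by
          ext R
          rw [Finset.mem_filter, Finset.mem_union, Finset.mem_union,
            Finset.mem_erase, Finset.mem_erase]
          constructor
          · rintro ⟨hR, hQR⟩
            rcases hR with h | h
            · exact Or.inl h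
            · refine Or.inr ⟨?_, ?_, h⟩
              · rintro rfl; exact hQR (subset_refl _)
              · rintro rfl; exact hQR (Finset.subset_insert _ _)
          · rintro (h | ⟨h1, h2, h3⟩)
            · refine ⟨Or.inl h, fun hQR => ?_⟩
              exact (Finset.mem_filter.mp h).2 (hβQ.trans hQR)
            · refine ⟨Or.inr h3, fun hQR => ?_⟩
              rcases hup R (Finset.mem_union_right _ h3) hQR with rfl | rfl
              · exact h1 rfl
              · exact h2 rfl
          -- note: in the first case of the backwards direction membership of R in Δ'' ∪ J
        rw [hKc'] at hpb
        refine Relation.ReflTransGen.trans hpb (ih ((J.erase (insert x Q)).erase Q) ?_ ?_ ?_)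
        · have hsub : (J.erase (insert x Q)).erase Q ⊆ J :=
            (Finset.erase_subset _ _).trans (Finset.erase_subset _ _)
          have hss : (J.erase (insert x Q)).erase Q ⊂ J := by
            refine ssubset_of_subset_of_ne hsub (fun h => ?_)
            have : Q ∈ (J.erase (insert x Q)).erase Q := h.symm ▸ hQJ
            exact (Finset.mem_erase.mp this).1 rfl
          have := Finset.card_lt_card hss
          omega
        · intro R hR
          exact hJI R ((Finset.erase_subset _ _).trans (Finset.erase_subset _ _) hR)
        · intro R hR R' hβR' hR'α hRe
          obtain ⟨hRQ, hRA, hRJ⟩ :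
              R ≠ Q ∧ R ≠ insert x Q ∧ R ∈ J := by
            obtain ⟨h1, h2⟩ := Finset.mem_erase.mp hR
            obtain ⟨h3, h4⟩ := Finset.mem_erase.mp h2
            exact ⟨h1, h3, h4⟩
          have hR'J : R' ∈ J := hD R hRJ R' hβR' hR'α hRe
          have hcore : ¬ (Q ⊆ R.erase x) := by
            intro hQRe
            have h1 : β ⊆ R.erase x := Finset.subset_erase.mpr ⟨(hJI R hRJ).2, hxβ⟩
            have h2 : R.erase x ∈ J := hD R hRJ (R.erase x) h1
              ((Finset.erase_subset _ _).trans (hcontain R (hJI R hRJ).1 (hJI R hRJ).2))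
              (Finset.erase_subset_erase x (Finset.erase_subset _ _))
            have h4 : Q = R.erase x := Finset.eq_of_subset_of_card_le hQRe
              (hQcard _ h2 (Finset.notMem_erase _ _))
            by_cases hxR : x ∈ R
            · exact hRA (by rw [← Finset.insert_erase hxR, ← h4])
            · exact hRQ (by rw [h4, Finset.erase_eq_of_notMem hxR])
          refine Finset.mem_erase.mpr ⟨?_, Finset.mem_erase.mpr ⟨?_, hR'J⟩⟩
          · intro heq
            apply hcore
            rw [← hQeq, ← heq]
            exact hRe
          · intro heq
            apply hcore
            have h5 : (insert x Q).erase x ⊆ R.erase x := heq ▸ hRe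
            rwa [Finset.erase_insert hxQ] at h5
      · -- J empty
        rw [Finset.not_nonempty_iff_eq_empty.mp hJne, Finset.union_empty]
        exact Relation.ReflTransGen.refl
  have hdecomp : Δ'' ∪ Δ.filter (fun Q => β ⊆ Q) = Δ := by
    ext R
    rw [Finset.mem_union, Finset.mem_filter, Finset.mem_filter]
    constructor
    · rintro (h | h)
      exacts [h.1, h.1]
    · intro h
      by_cases hβR : β ⊆ R
      · exact Or.inr ⟨h, hβR⟩
      · exact Or.inl ⟨h, hβR⟩
  have := main (Δ.filter (fun Q => β ⊆ Q)).card (Δ.filter (fun Q => β ⊆ Q)) le_rfl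
    (fun R hR => ⟨(Finset.mem_filter.mp hR).1, (Finset.mem_filter.mp hR).2⟩)
    (fun R hR R' hβR' hR'α _ => Finset.mem_filter.mpr
      ⟨hsubmem R' hR'α (hβne.mono hβR'), hβR'⟩)
  rwa [hdecomp] at this

lemma collapse_bary (Δ Δ' : Finset (Finset V)) (hΔ : IsComplex Δ)
    (h : CollapsesTo Δ Δ') : CollapsesTo (bary Δ) (bary Δ') := by
  have key : ∀ (a : Finset (Finset V)), CollapsesTo a Δ' →
      IsComplex a → CollapsesTo (bary a) (bary Δ') := by
    intro a h
    induction h using Relation.ReflTransGen.head_induction_on with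
    | refl => exact fun _ => Relation.ReflTransGen.refl
    | head hstep hrest ih =>
      intro hca
      exact Relation.ReflTransGen.trans (step_bar _ _ hca hstep)
        (ih (elem_preserves hstep hca))
  exact key Δ h hΔ
end Step


/-- If `Δ` is collapsible then so is its barycentric subdivision; more
generally, if `Δ` collapses onto a subcomplex `Δ'`, then `bar(Δ)` collapses
onto `bar(Δ')`. -/
theorem bary_collapsible {V : Type*} [DecidableEq V]
    (Δ : Finset (Finset V)) (hΔ : IsComplex Δ) :
    (Collapsible Δ → Collapsible (bary Δ)) ∧
    (∀ Δ' : Finset (Finset V), IsComplex Δ' → Δ' ⊆ Δ →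
      CollapsesTo Δ Δ' → CollapsesTo (bary Δ) (bary Δ')) := by
  constructor
  · rintro ⟨v, hv⟩
    refine ⟨{v}, ?_⟩
    have hcb := collapse_bary Δ _ hΔ hv
    have hb : bary ({({v} : Finset V)} : Finset (Finset V)) =
        {({({v} : Finset V)} : Finset (Finset V))} := by
      ext C
      rw [mem_bary, Finset.mem_singleton]
      constructor
      · rintro ⟨hsub, hne, _⟩
        rcases Finset.subset_singleton_iff.mp hsub with rfl | rfl
        · exact absurd hne (by simp)
        · rfl
      · rintro rfl
        refine ⟨subset_refl _, ⟨{v}, Finset.mem_singleton_self _⟩, ?_⟩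
        intro a ha b hb
        rw [Finset.mem_singleton] at ha hb
        rw [ha, hb]
        exact Or.inl (subset_refl _)
    rwa [hb] at hcb
  · intro Δ' _ _ h
    exact collapse_bary Δ Δ' hΔ h
end
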